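/- arXiv:1006.1022 — 12 statements merged into one kernel-verified Lean document; each statement's English description precedes it below -/
import Mathlib

section
/- Let X be a real normed space and let x, y be nonzero elements of X. Then the angular distance satisfies ‖x/‖x‖ − y/‖y‖‖ ≤ 4‖x−y‖/(‖x‖+‖y‖). -/
/-!
Scaling `‖x‖⁻¹ • x - ‖y‖⁻¹ • y` by `‖x‖` gives `(x - y) + (‖y‖ - ‖x‖) • (‖y‖⁻¹ • y)`, whose norm is at
most `2 ‖x - y‖` by the reverse triangle inequality. Adding this to the same bound with `x` and `y`
swapped gives `(‖x‖ + ‖y‖) ‖‖x‖⁻¹ • x - ‖y‖⁻¹ • y‖ ≤ 4 ‖x - y‖`.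
-/

section

variable {X : Type*} [NormedAddCommGroup X] [NormedSpace ℝ X]

theorem norm_smul_inv_norm_smul (x : X) : ‖x‖ • ‖x‖⁻¹ • x = x := by
  rcases eq_or_ne x 0 with rfl | hx
  · simp
  · exact smul_inv_smul₀ (norm_ne_zero_iff.mpr hx) x

theorem norm_mul_norm_inv_smul_sub_le (x y : X) :
    ‖x‖ * ‖‖x‖⁻¹ • x - ‖y‖⁻¹ • y‖ ≤ 2 * ‖x - y‖ := by
  set u := ‖y‖⁻¹ • y
  have hu : ‖u‖ ≤ 1 := by simpa using inv_norm_smul_mem_unitClosedBall y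
  have hscaled : ‖x‖ • (‖x‖⁻¹ • x - u) = (x - y) + (‖y‖ - ‖x‖) • u := by
    rw [smul_sub, norm_smul_inv_norm_smul, sub_smul, norm_smul_inv_norm_smul]
    abel
  calc ‖x‖ * ‖‖x‖⁻¹ • x - u‖ = ‖(x - y) + (‖y‖ - ‖x‖) • u‖ := by
        rw [← hscaled, norm_smul, norm_norm]
    _ ≤ ‖x - y‖ + |‖y‖ - ‖x‖| * ‖u‖ := by
        grw [norm_add_le, norm_smul, Real.norm_eq_abs]
    _ ≤ ‖x - y‖ + ‖x - y‖ * 1 := by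
        gcongr
        rw [abs_sub_comm]
        exact abs_norm_sub_norm_le x y
    _ = 2 * ‖x - y‖ := by ring

end

theorem dunkl_williams_general {X : Type*} [NormedAddCommGroup X] [NormedSpace ℝ X]
    (x y : X) :
    ‖‖x‖⁻¹ • x - ‖y‖⁻¹ • y‖ ≤ 4 * ‖x - y‖ / (‖x‖ + ‖y‖) := by
  have hxy := norm_mul_norm_inv_smul_sub_le x y
  have hyx := norm_mul_norm_inv_smul_sub_le y x
  rw [norm_sub_rev, norm_sub_rev y] at hyx
  rcases (add_nonneg (norm_nonneg x) (norm_nonneg y)).eq_or_lt with hsum | hsum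
  · have hx0 : x = 0 := norm_eq_zero.mp (by linarith [norm_nonneg x, norm_nonneg y])
    have hy0 : y = 0 := norm_eq_zero.mp (by linarith [norm_nonneg x, norm_nonneg y])
    simp [hx0, hy0]
  · rw [le_div_iff₀ hsum]
    linarith

theorem dunkl_williams {X : Type*} [NormedAddCommGroup X] [NormedSpace ℝ X]
    (x y : X) (hx : x ≠ 0) (hy : y ≠ 0) :
    ‖‖x‖⁻¹ • x - ‖y‖⁻¹ • y‖ ≤ 4 * ‖x - y‖ / (‖x‖ + ‖y‖) :=
  dunkl_williams_general x y
end

section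
/- Let X be a real inner product space and let x, y be nonzero elements of X. Then ‖x/‖x‖ − y/‖y‖‖ ≤ 2‖x−y‖/(‖x‖+‖y‖). -/
/-!
Put `u = ‖x‖⁻¹ • x`, `v = ‖y‖⁻¹ • y`, `a = ‖x‖`, `b = ‖y‖`. Then
`x - y = a • u - b • v = ((a + b) / 2) • (u - v) + ((a - b) / 2) • (u + v)`,
and `u - v ⟂ u + v` because `‖u‖ = ‖v‖`. By Pythagoras `‖x - y‖` dominates
`(a + b) / 2 * ‖u - v‖`, which is the inequality.
-/

open scoped RealInnerProductSpace

section

variable {F : Type*} [SeminormedAddCommGroup F] [InnerProductSpace ℝ F]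

theorem norm_le_norm_add_of_real_inner_eq_zero {p q : F} (h : ⟪p, q⟫ = 0) :
    ‖p‖ ≤ ‖p + q‖ := by
  rw [mul_self_le_mul_self_iff (norm_nonneg _) (norm_nonneg _),
    norm_add_sq_eq_norm_sq_add_norm_sq_real h]
  exact le_add_of_nonneg_right (mul_self_nonneg _)

theorem abs_add_div_two_mul_norm_sub_le_norm_smul_sub_smul {u v : F} (huv : ‖u‖ = ‖v‖)
    (a b : ℝ) : |a + b| / 2 * ‖u - v‖ ≤ ‖a • u - b • v‖ := by
  have horth : ⟪((a + b) / 2) • (u - v), ((a - b) / 2) • (u + v)⟫ = 0 := by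
    rw [real_inner_smul_left, real_inner_smul_right, real_inner_comm,
      (real_inner_add_sub_eq_zero_iff u v).2 huv, mul_zero, mul_zero]
  have hsplit : a • u - b • v = ((a + b) / 2) • (u - v) + ((a - b) / 2) • (u + v) := by
    module
  calc |a + b| / 2 * ‖u - v‖ = ‖((a + b) / 2) • (u - v)‖ := by
        rw [norm_smul, Real.norm_eq_abs, abs_div, abs_two]
    _ ≤ ‖a • u - b • v‖ := hsplit ▸ norm_le_norm_add_of_real_inner_eq_zero horth

end

theorem norm_inv_norm_smul_self {E : Type*} [NormedAddCommGroup E] [NormedSpace ℝ E] {x : E}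
    (hx : x ≠ 0) : ‖‖x‖⁻¹ • x‖ = 1 := by
  rw [norm_smul, norm_inv, norm_norm, inv_mul_cancel₀ (norm_ne_zero_iff.2 hx)]

theorem dunkl_williams_inner {X : Type*} [NormedAddCommGroup X] [InnerProductSpace ℝ X]
    (x y : X) (hx : x ≠ 0) (hy : y ≠ 0) :
    ‖‖x‖⁻¹ • x - ‖y‖⁻¹ • y‖ ≤ 2 * ‖x - y‖ / (‖x‖ + ‖y‖) := by
  have hxpos : 0 < ‖x‖ := norm_pos_iff.2 hx
  have hypos : 0 < ‖y‖ := norm_pos_iff.2 hy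
  have key := abs_add_div_two_mul_norm_sub_le_norm_smul_sub_smul
    (u := ‖x‖⁻¹ • x) (v := ‖y‖⁻¹ • y)
    (by rw [norm_inv_norm_smul_self hx, norm_inv_norm_smul_self hy]) ‖x‖ ‖y‖
  rw [smul_inv_smul₀ hxpos.ne', smul_inv_smul₀ hypos.ne', abs_of_pos (by positivity)] at key
  rw [le_div_iff₀ (by positivity)]
  linarith
end

section
/- Let X be a real normed space, p ∈ [0,1], and x, y nonzero elements of X. Then the p-angular distance satisfies α_p[x,y] ≤ (2−p)·‖x−y‖/(max{‖x‖,‖y‖})^{1−p}. -/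
open Real

private lemma maligranda_aux {X : Type*} [NormedAddCommGroup X] [NormedSpace ℝ X]
    (p : ℝ) (hp : p ∈ Set.Icc (0:ℝ) 1) (x y : X) (hx : x ≠ 0) (hy : y ≠ 0)
    (hba : ‖y‖ ≤ ‖x‖) :
    ‖(‖x‖ ^ (p - 1)) • x - (‖y‖ ^ (p - 1)) • y‖ ≤
      (2 - p) * ‖x - y‖ / (max ‖x‖ ‖y‖) ^ (1 - p) := by
  obtain ⟨hp0, hp1⟩ := hp
  set a := ‖x‖ with ha
  set b := ‖y‖ with hb
  have hbpos : (0:ℝ) < b := norm_pos_iff.mpr hy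
  have hapos : (0:ℝ) < a := lt_of_lt_of_le hbpos hba
  have hmax : max a b = a := max_eq_left hba
  rw [hmax]
  -- rewrite division
  have hdiv : (2 - p) * ‖x - y‖ / a ^ (1 - p) = (2 - p) * ‖x - y‖ * a ^ (p - 1) := by
    rw [show p - 1 = -(1 - p) by ring, Real.rpow_neg hapos.le, div_eq_mul_inv]
  rw [hdiv]
  -- triangle inequality step
  have hsplit : (a ^ (p - 1)) • x - (b ^ (p - 1)) • y
      = (a ^ (p - 1)) • (x - y) + (a ^ (p - 1) - b ^ (p - 1)) • y := by
    simp [smul_sub, sub_smul]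
  have hle1 : a ^ (p - 1) ≤ b ^ (p - 1) := by
    apply Real.rpow_le_rpow_of_nonpos hbpos hba (by linarith)
  have step1 : ‖(a ^ (p - 1)) • x - (b ^ (p - 1)) • y‖
      ≤ a ^ (p - 1) * ‖x - y‖ + (b ^ (p - 1) - a ^ (p - 1)) * b := by
    rw [hsplit]
    refine (norm_add_le _ _).trans ?_
    rw [norm_smul, norm_smul, Real.norm_eq_abs, Real.norm_eq_abs,
      abs_of_nonneg (Real.rpow_nonneg hapos.le _),
      abs_of_nonpos (by linarith)]
    ring_nf
    rfl
  refine step1.trans ?_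
  -- key scalar inequality: (b^(p-1) - a^(p-1)) * b ≤ (1-p) * (a - b) * a^(p-1)
  have key : (b ^ (p - 1) - a ^ (p - 1)) * b ≤ (1 - p) * (a - b) * a ^ (p - 1) := by
    have hb1 : b ^ (p - 1) * b = b ^ p := by
      rw [Real.rpow_sub hbpos, Real.rpow_one]
      field_simp
    have hbern : (b / a) ^ p ≤ 1 + p * (b / a - 1) := by
      have := rpow_one_add_le_one_add_mul_self (s := b / a - 1)
        (by have : 0 < b / a := div_pos hbpos hapos; linarith) hp0 hp1
      simpa using this
    have hdivpow : (b / a) ^ p = b ^ p / a ^ p := Real.div_rpow hbpos.le hapos.le p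
    have hap : (0:ℝ) < a ^ p := Real.rpow_pos_of_pos hapos _
    have hbp : b ^ p ≤ a ^ p * (1 + p * (b / a - 1)) := by
      rw [hdivpow, div_le_iff₀ hap] at hbern
      linarith [hbern]
    have hae : a ^ p = a * a ^ (p - 1) := by
      rw [Real.rpow_sub hapos, Real.rpow_one]
      field_simp
    have haap : a ^ (p-1) * a = a ^ p := by rw [hae]; ring
    -- expand: a^p * (1 + p*(b/a - 1)) = a^p + p*b*a^(p-1) - p*a^p
    have hexp : a ^ p * (1 + p * (b / a - 1)) = a ^ p + p * b * a ^ (p - 1) - p * a ^ p := by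
      field_simp
      rw [hae]; ring
    rw [hexp] at hbp
    -- goal: b^p - a^(p-1)*b ≤ (1-p)(a-b)a^(p-1)
    have hab1 : a * a ^ (p-1) = a ^ p := hae.symm
    nlinarith [hbp, hb1, hab1]
  have hxy : a - b ≤ ‖x - y‖ := by
    have := norm_sub_norm_le x y
    linarith
  have h2 : (1 - p) * (a - b) * a ^ (p - 1) ≤ (1 - p) * ‖x - y‖ * a ^ (p - 1) := by
    have hnn := Real.rpow_nonneg hapos.le (p - 1)
    exact mul_le_mul_of_nonneg_right
      (mul_le_mul_of_nonneg_left hxy (by linarith : (0:ℝ) ≤ 1 - p)) hnn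
  calc a ^ (p - 1) * ‖x - y‖ + (b ^ (p - 1) - a ^ (p - 1)) * b
      ≤ a ^ (p - 1) * ‖x - y‖ + (1 - p) * ‖x - y‖ * a ^ (p - 1) := by linarith [key.trans h2]
    _ = (2 - p) * ‖x - y‖ * a ^ (p - 1) := by ring

theorem maligranda {X : Type*} [NormedAddCommGroup X] [NormedSpace ℝ X]
    (p : ℝ) (hp : p ∈ Set.Icc (0:ℝ) 1) (x y : X) (hx : x ≠ 0) (hy : y ≠ 0) :
    ‖(‖x‖ ^ (p - 1)) • x - (‖y‖ ^ (p - 1)) • y‖ ≤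
      (2 - p) * ‖x - y‖ / (max ‖x‖ ‖y‖) ^ (1 - p) := by
  rcases le_total ‖y‖ ‖x‖ with h | h
  · exact maligranda_aux p hp x y hx hy h
  · have := maligranda_aux p hp y x hy hx h
    rw [norm_sub_rev y x, max_comm ‖y‖ ‖x‖] at this
    calc ‖(‖x‖ ^ (p - 1)) • x - (‖y‖ ^ (p - 1)) • y‖
        = ‖(‖y‖ ^ (p - 1)) • y - (‖x‖ ^ (p - 1)) • x‖ := by rw [norm_sub_rev]
      _ ≤ _ := this
end

section
/- Let X be a real normed space, p ∈ [0,1], q > 0, and x, y nonzero elements of X. Then α_p[x,y] ≤ 2^{1+1/q}·‖x−y‖/(‖x‖^{(1−p)q} + ‖y‖^{(1−p)q})^{1/q}. -/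
open Real

private lemma maligranda_two {X : Type*} [NormedAddCommGroup X] [NormedSpace ℝ X]
    (p : ℝ) (hp0 : 0 ≤ p) (hp1 : p ≤ 1) (x y : X) (hx : x ≠ 0) (hy : y ≠ 0)
    (hba : ‖y‖ ≤ ‖x‖) :
    ‖(‖x‖ ^ (p - 1)) • x - (‖y‖ ^ (p - 1)) • y‖ ≤ 2 * ‖x - y‖ * ‖x‖ ^ (p - 1) := by
  have ha : (0:ℝ) < ‖x‖ := norm_pos_iff.mpr hx
  have hb : (0:ℝ) < ‖y‖ := norm_pos_iff.mpr hy
  have key : (‖x‖ ^ (p-1)) • x - (‖y‖ ^ (p-1)) • y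
      = (‖x‖ ^ (p-1)) • (x - y) + (‖x‖ ^ (p-1) - ‖y‖ ^ (p-1)) • y := by
    rw [smul_sub, sub_smul]; abel
  have hmono : ‖x‖ ^ (p-1) ≤ ‖y‖ ^ (p-1) :=
    Real.rpow_le_rpow_of_nonpos hb hba (by linarith)
  have hpow : ‖y‖ ^ p ≤ ‖x‖ ^ p := Real.rpow_le_rpow hb.le hba hp0
  have hbx : ‖y‖ ^ (p-1) * ‖y‖ = ‖y‖ ^ p := by
    nth_rewrite 2 [← Real.rpow_one ‖y‖]
    rw [← Real.rpow_add hb]; norm_num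
  have hax : ‖x‖ ^ (p-1) * ‖x‖ = ‖x‖ ^ p := by
    nth_rewrite 2 [← Real.rpow_one ‖x‖]
    rw [← Real.rpow_add ha]; norm_num
  have hnn : (0:ℝ) ≤ ‖x‖ ^ (p-1) := Real.rpow_nonneg ha.le _
  have hdiff : ‖x‖ - ‖y‖ ≤ ‖x - y‖ := norm_sub_norm_le x y
  calc ‖(‖x‖ ^ (p-1)) • x - (‖y‖ ^ (p-1)) • y‖
      = ‖(‖x‖ ^ (p-1)) • (x - y) + (‖x‖ ^ (p-1) - ‖y‖ ^ (p-1)) • y‖ := by rw [key]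
    _ ≤ ‖(‖x‖ ^ (p-1)) • (x - y)‖ + ‖(‖x‖ ^ (p-1) - ‖y‖ ^ (p-1)) • y‖ := norm_add_le _ _
    _ = ‖x‖ ^ (p-1) * ‖x - y‖ + (‖y‖ ^ (p-1) - ‖x‖ ^ (p-1)) * ‖y‖ := by
        rw [norm_smul, norm_smul, Real.norm_of_nonneg hnn, Real.norm_eq_abs,
          abs_of_nonpos (by linarith)]
        ring
    _ ≤ 2 * ‖x - y‖ * ‖x‖ ^ (p-1) := by nlinarith

private lemma pangular_aux {X : Type*} [NormedAddCommGroup X] [NormedSpace ℝ X]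
    (p q : ℝ) (hp0 : 0 ≤ p) (hp1 : p ≤ 1) (hq : 0 < q)
    (x y : X) (hx : x ≠ 0) (hy : y ≠ 0) (hba : ‖y‖ ≤ ‖x‖) :
    ‖(‖x‖ ^ (p - 1)) • x - (‖y‖ ^ (p - 1)) • y‖ ≤
      2 ^ (1 + 1 / q) * ‖x - y‖ / (‖x‖ ^ ((1 - p) * q) + ‖y‖ ^ ((1 - p) * q)) ^ (1 / q) := by
  have ha : (0:ℝ) < ‖x‖ := norm_pos_iff.mpr hx
  have hb : (0:ℝ) < ‖y‖ := norm_pos_iff.mpr hy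
  have hmal := maligranda_two p hp0 hp1 x y hx hy hba
  have hD : (0:ℝ) < ‖x‖ ^ ((1-p)*q) + ‖y‖ ^ ((1-p)*q) := by positivity
  have hDq : ((‖x‖:ℝ) ^ ((1-p)*q) + ‖y‖ ^ ((1-p)*q)) ^ (1/q) ≤ 2 ^ (1/q) * ‖x‖ ^ (1-p) := by
    have h2 : (‖x‖:ℝ) ^ ((1-p)*q) + ‖y‖ ^ ((1-p)*q) ≤ 2 * ‖x‖ ^ ((1-p)*q) := by
      have := Real.rpow_le_rpow hb.le hba (mul_nonneg (by linarith : (0:ℝ) ≤ 1-p) hq.le)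
      linarith
    calc ((‖x‖:ℝ) ^ ((1-p)*q) + ‖y‖ ^ ((1-p)*q)) ^ (1/q)
        ≤ (2 * ‖x‖ ^ ((1-p)*q)) ^ (1/q) :=
          Real.rpow_le_rpow hD.le h2 (by positivity)
      _ = 2 ^ (1/q) * ‖x‖ ^ (1-p) := by
          rw [Real.mul_rpow (by norm_num) (Real.rpow_nonneg ha.le _),
            ← Real.rpow_mul ha.le]
          congr 1
          field_simp
  rw [le_div_iff₀ (by positivity)]
  have hnn : (0:ℝ) ≤ 2 * ‖x - y‖ * ‖x‖ ^ (p-1) := by positivity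
  have hmul := mul_le_mul hmal hDq (Real.rpow_nonneg hD.le _) hnn
  refine hmul.trans_eq ?_
  have hcancel : ‖x‖ ^ (p-1) * ‖x‖ ^ (1-p) = 1 := by
    rw [← Real.rpow_add ha]
    norm_num
  have h2q : (2:ℝ) ^ (1 + 1/q) = 2 * 2 ^ (1/q) := by
    rw [Real.rpow_add (by norm_num), Real.rpow_one]
  rw [h2q]
  calc 2 * ‖x - y‖ * ‖x‖ ^ (p-1) * (2 ^ (1/q) * ‖x‖ ^ (1-p))
      = 2 * 2 ^ (1/q) * ‖x - y‖ * (‖x‖ ^ (p-1) * ‖x‖ ^ (1-p)) := by ring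
    _ = 2 * 2 ^ (1/q) * ‖x - y‖ := by rw [hcancel, mul_one]

theorem pangular_upper {X : Type*} [NormedAddCommGroup X] [NormedSpace ℝ X]
    (p q : ℝ) (hp : p ∈ Set.Icc (0:ℝ) 1) (hq : 0 < q)
    (x y : X) (hx : x ≠ 0) (hy : y ≠ 0) :
    ‖(‖x‖ ^ (p - 1)) • x - (‖y‖ ^ (p - 1)) • y‖ ≤
      2 ^ (1 + 1 / q) * ‖x - y‖ / (‖x‖ ^ ((1 - p) * q) + ‖y‖ ^ ((1 - p) * q)) ^ (1 / q) := by
  obtain ⟨hp0, hp1⟩ := hp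
  rcases le_total ‖y‖ ‖x‖ with h | h
  · exact pangular_aux p q hp0 hp1 hq x y hx hy h
  · have := pangular_aux p q hp0 hp1 hq y x hy hx h
    rw [norm_sub_rev y x, add_comm ((‖y‖:ℝ) ^ ((1-p)*q))] at this
    rw [show ‖(‖x‖ ^ (p - 1)) • x - (‖y‖ ^ (p - 1)) • y‖
        = ‖(‖y‖ ^ (p - 1)) • y - (‖x‖ ^ (p - 1)) • x‖ from norm_sub_rev _ _]
    exact this
end

section
/- Let X be a real inner product space, p ∈ [0,1], and x, y nonzero elements of X. Then α_p[x,y] ≤ 2‖x−y‖/(‖x‖^{1−p} + ‖y‖^{1−p}). -/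
/-!
Put `A = ‖x‖ ^ (1 - p)` and `B = ‖y‖ ^ (1 - p)`, so that `‖x‖ ^ (p - 1) = A⁻¹`. Multiplying by
`A + B`, the claim becomes `‖α • x - β • y‖ ≤ 2 * ‖x - y‖` with `α = (A + B) / A` and
`β = (A + B) / B`. Expanding both squared norms, the difference is affine in `⟪x, y⟫` with slope
`2 * (α * β - 4) ≥ 0`, so it suffices to check the extreme case `⟪x, y⟫ = -‖x‖ * ‖y‖`, i.e.
`α * ‖x‖ + β * ‖y‖ ≤ 2 * (‖x‖ + ‖y‖)`. That is the Chebyshev-type inequality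
`a ^ p * b ^ (1 - p) + b ^ p * a ^ (1 - p) ≤ a + b`, which holds because `t ↦ t ^ p` and
`t ↦ t ^ (1 - p)` are both monotone.
-/

open Real

theorem rpow_mul_rpow_add_rpow_mul_rpow_le {a b p q : ℝ} (ha : 0 < a) (hb : 0 < b)
    (hp : 0 ≤ p) (hq : 0 ≤ q) :
    a ^ p * b ^ q + b ^ p * a ^ q ≤ a ^ (p + q) + b ^ (p + q) := by
  have hmono : 0 ≤ (a ^ p - b ^ p) * (a ^ q - b ^ q) := by
    rcases le_total a b with hab | hab
    · exact mul_nonneg_of_nonpos_of_nonpos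
        (sub_nonpos.2 (rpow_le_rpow ha.le hab hp)) (sub_nonpos.2 (rpow_le_rpow ha.le hab hq))
    · exact mul_nonneg
        (sub_nonneg.2 (rpow_le_rpow hb.le hab hp)) (sub_nonneg.2 (rpow_le_rpow hb.le hab hq))
  rw [rpow_add ha, rpow_add hb]
  linarith

section InnerProductSpace

variable {X : Type*} [NormedAddCommGroup X] [InnerProductSpace ℝ X]

theorem norm_smul_sub_smul_le_two_mul_norm_sub {α β : ℝ} (hα : 0 ≤ α) (hβ : 0 ≤ β)
    (hαβ : 4 ≤ α * β) (x y : X) (h : α * ‖x‖ + β * ‖y‖ ≤ 2 * (‖x‖ + ‖y‖)) :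
    ‖α • x - β • y‖ ≤ 2 * ‖x - y‖ := by
  have hinner : -(‖x‖ * ‖y‖) ≤ inner ℝ x y := neg_le_of_abs_le (abs_real_inner_le_norm x y)
  have hsq : (α * ‖x‖ + β * ‖y‖) ^ 2 ≤ (2 * (‖x‖ + ‖y‖)) ^ 2 :=
    pow_le_pow_left₀ (by positivity) h 2
  have hslope : 0 ≤ (α * β - 4) * (inner ℝ x y + ‖x‖ * ‖y‖) :=
    mul_nonneg (by linarith) (by linarith)
  rw [← pow_le_pow_iff_left₀ (norm_nonneg _) (by positivity) two_ne_zero, mul_pow,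
    norm_sub_sq_real, norm_sub_sq_real, norm_smul, norm_smul, real_inner_smul_left,
    real_inner_smul_right, norm_of_nonneg hα, norm_of_nonneg hβ]
  nlinarith

theorem add_mul_norm_inv_smul_sub_inv_smul_le {A B : ℝ} (hA : 0 < A) (hB : 0 < B) (x y : X)
    (h : B / A * ‖x‖ + A / B * ‖y‖ ≤ ‖x‖ + ‖y‖) :
    (A + B) * ‖A⁻¹ • x - B⁻¹ • y‖ ≤ 2 * ‖x - y‖ := by
  have hsmul : (A + B) • (A⁻¹ • x - B⁻¹ • y) = ((A + B) / A) • x - ((A + B) / B) • y := by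
    rw [smul_sub, smul_smul, smul_smul, div_eq_mul_inv, div_eq_mul_inv]
  rw [← norm_of_nonneg (by positivity : 0 ≤ A + B), ← norm_smul, hsmul]
  refine norm_smul_sub_smul_le_two_mul_norm_sub (by positivity) (by positivity) ?_ x y ?_
  · rw [div_mul_div_comm, le_div_iff₀ (by positivity)]
    nlinarith [sq_nonneg (A - B)]
  · have hα : (A + B) / A = 1 + B / A := by field_simp
    have hβ : (A + B) / B = 1 + A / B := by field_simp; ring
    rw [hα, hβ]
    linarith

end InnerProductSpace

theorem pangular_inner {X : Type*} [NormedAddCommGroup X] [InnerProductSpace ℝ X]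
    (p : ℝ) (hp : p ∈ Set.Icc (0:ℝ) 1) (x y : X) (hx : x ≠ 0) (hy : y ≠ 0) :
    ‖(‖x‖ ^ (p - 1)) • x - (‖y‖ ^ (p - 1)) • y‖ ≤
      2 * ‖x - y‖ / (‖x‖ ^ (1 - p) + ‖y‖ ^ (1 - p)) := by
  obtain ⟨hp0, hp1⟩ := hp
  have ha : 0 < ‖x‖ := norm_pos_iff.2 hx
  have hb : 0 < ‖y‖ := norm_pos_iff.2 hy
  have hA : 0 < ‖x‖ ^ (1 - p) := rpow_pos_of_pos ha _
  have hB : 0 < ‖y‖ ^ (1 - p) := rpow_pos_of_pos hb _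
  have hexp : p - 1 = -(1 - p) := by ring
  rw [hexp, rpow_neg ha.le, rpow_neg hb.le, le_div_iff₀ (by positivity), mul_comm]
  refine add_mul_norm_inv_smul_sub_inv_smul_le hA hB x y ?_
  have hcheb := rpow_mul_rpow_add_rpow_mul_rpow_le ha hb hp0 (sub_nonneg.2 hp1)
  rw [add_sub_cancel, rpow_one, rpow_one] at hcheb
  have hxp : ‖x‖ / ‖x‖ ^ (1 - p) = ‖x‖ ^ p := by
    conv_rhs => rw [← sub_sub_cancel 1 p, rpow_sub ha, rpow_one]
  have hyp : ‖y‖ / ‖y‖ ^ (1 - p) = ‖y‖ ^ p := by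
    conv_rhs => rw [← sub_sub_cancel 1 p, rpow_sub hb, rpow_one]
  calc _ = ‖y‖ ^ (1 - p) * (‖x‖ / ‖x‖ ^ (1 - p)) + ‖x‖ ^ (1 - p) * (‖y‖ / ‖y‖ ^ (1 - p)) := by
        ring
    _ ≤ ‖x‖ + ‖y‖ := by rw [hxp, hyp]; linarith
end

section
/- Let x, y be nonzero vectors in a real inner product space and p ∈ [0,1] with x ≠ y. Then (‖x‖^{1−p} − ‖y‖^{1−p})²/(‖x‖^{1−p} + ‖y‖^{1−p})² · ‖x−y‖² + (‖x‖^{p+1}‖y‖^{1−p} + ‖x‖^{1−p}‖y‖^{p+1}) ≤ ‖x‖² + ‖y‖². -/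
private lemma core_poly (s t P Q c : ℝ) (ht : 0 < t) (hts : t ≤ s)
    (hQ : 0 < Q) (hQP : Q ≤ P) (hc0 : 0 ≤ c) (hc : c ≤ (s * P + t * Q) ^ 2) :
    (s - t) ^ 2 / (s + t) ^ 2 * c + (P ^ 2 * s * t + s * (Q ^ 2 * t))
      ≤ (s * P) ^ 2 + (t * Q) ^ 2 := by
  have hs : 0 < s := lt_of_lt_of_le ht hts
  have hP : 0 < P := lt_of_lt_of_le hQ hQP
  have hst : 0 < (s + t) ^ 2 := by positivity
  have hsub : 0 ≤ s - t := by linarith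
  have hab : 0 ≤ s * P + t * Q := by positivity
  have hfrac : (s - t) ^ 2 / (s + t) ^ 2 * c
      ≤ (s - t) * (P ^ 2 * s - Q ^ 2 * t) := by
    rw [div_mul_eq_mul_div, div_le_iff₀ hst]
    have h1 : (s - t) ^ 2 * c ≤ (s - t) ^ 2 * (s * P + t * Q) ^ 2 :=
      mul_le_mul_of_nonneg_left hc (by positivity)
    refine h1.trans ?_
    have m1 : (s - t) * (s * P + t * Q) ≤ (s * P - t * Q) * (s + t) := by
      nlinarith [mul_nonneg (mul_nonneg hs.le ht.le) (sub_nonneg.mpr hQP)]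
    have m2 : (s * P - t * Q) * (s * P + t * Q) ≤ (P ^ 2 * s - Q ^ 2 * t) * (s + t) := by
      nlinarith [mul_nonneg (mul_nonneg hs.le ht.le)
        (mul_nonneg (sub_nonneg.mpr hQP) (by positivity : (0:ℝ) ≤ P + Q))]
    have hA0 : 0 ≤ (s - t) * (s * P + t * Q) := mul_nonneg hsub hab
    calc (s - t) ^ 2 * (s * P + t * Q) ^ 2
        = ((s - t) * (s * P + t * Q)) * ((s - t) * (s * P + t * Q)) := by ring
      _ ≤ ((s - t) * (s * P + t * Q)) * ((s * P - t * Q) * (s + t)) :=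
          mul_le_mul_of_nonneg_left m1 hA0
      _ = ((s - t) * (s + t)) * ((s * P - t * Q) * (s * P + t * Q)) := by ring
      _ ≤ ((s - t) * (s + t)) * ((P ^ 2 * s - Q ^ 2 * t) * (s + t)) :=
          mul_le_mul_of_nonneg_left m2 (mul_nonneg hsub (by positivity))
      _ = (s - t) * (P ^ 2 * s - Q ^ 2 * t) * (s + t) ^ 2 := by ring
  nlinarith [hfrac]

private lemma aux_scalar (p a b c : ℝ) (hp0 : 0 ≤ p) (hp1 : p ≤ 1)
    (hb : 0 < b) (hba : b ≤ a) (hc0 : 0 ≤ c) (hc : c ≤ (a + b) ^ 2) :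
    (a ^ (1 - p) - b ^ (1 - p)) ^ 2 / (a ^ (1 - p) + b ^ (1 - p)) ^ 2 * c
      + (a ^ (p + 1) * b ^ (1 - p) + a ^ (1 - p) * b ^ (p + 1))
      ≤ a ^ 2 + b ^ 2 := by
  have ha : 0 < a := lt_of_lt_of_le hb hba
  set s := a ^ (1 - p) with hs_def
  set t := b ^ (1 - p) with ht_def
  have ht : 0 < t := Real.rpow_pos_of_pos hb _
  have hts : t ≤ s := Real.rpow_le_rpow hb.le hba (by linarith)
  have hQ : 0 < b ^ p := Real.rpow_pos_of_pos hb _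
  have hQP : b ^ p ≤ a ^ p := Real.rpow_le_rpow hb.le hba hp0
  have hsa : s * a ^ p = a := by
    rw [hs_def, ← Real.rpow_add ha]; simp
  have htb : t * b ^ p = b := by
    rw [ht_def, ← Real.rpow_add hb]; simp
  have hA : a ^ (p + 1) = (a ^ p) ^ 2 * s := by
    rw [hs_def, ← Real.rpow_natCast (a ^ p) 2, ← Real.rpow_mul ha.le, ← Real.rpow_add ha]
    congr 1; ring
  have hB : b ^ (p + 1) = (b ^ p) ^ 2 * t := by
    rw [ht_def, ← Real.rpow_natCast (b ^ p) 2, ← Real.rpow_mul hb.le, ← Real.rpow_add hb]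
    congr 1; ring
  have hc' : c ≤ (s * a ^ p + t * b ^ p) ^ 2 := by rw [hsa, htb]; exact hc
  have := core_poly s t (a ^ p) (b ^ p) c ht hts hQ hQP hc0 hc'
  calc (a ^ (1 - p) - b ^ (1 - p)) ^ 2 / (a ^ (1 - p) + b ^ (1 - p)) ^ 2 * c
        + (a ^ (p + 1) * b ^ (1 - p) + a ^ (1 - p) * b ^ (p + 1))
      = (s - t) ^ 2 / (s + t) ^ 2 * c
        + ((a ^ p) ^ 2 * s * t + s * ((b ^ p) ^ 2 * t)) := by
        rw [hA, hB]; try ring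
    _ ≤ (s * a ^ p) ^ 2 + (t * b ^ p) ^ 2 := this
    _ = a ^ 2 + b ^ 2 := by rw [hsa, htb]

theorem key_scalar_ineq {X : Type*} [NormedAddCommGroup X] [InnerProductSpace ℝ X]
    (p : ℝ) (hp : p ∈ Set.Icc (0:ℝ) 1) (x y : X) (hx : x ≠ 0) (hy : y ≠ 0) (hxy : x ≠ y) :
    (‖x‖ ^ (1 - p) - ‖y‖ ^ (1 - p)) ^ 2 / (‖x‖ ^ (1 - p) + ‖y‖ ^ (1 - p)) ^ 2 * ‖x - y‖ ^ 2
      + (‖x‖ ^ (p + 1) * ‖y‖ ^ (1 - p) + ‖x‖ ^ (1 - p) * ‖y‖ ^ (p + 1))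
      ≤ ‖x‖ ^ 2 + ‖y‖ ^ 2 := by
  obtain ⟨hp0, hp1⟩ := hp
  have hxpos : 0 < ‖x‖ := norm_pos_iff.mpr hx
  have hypos : 0 < ‖y‖ := norm_pos_iff.mpr hy
  have htri : ‖x - y‖ ≤ ‖x‖ + ‖y‖ := norm_sub_le x y
  have hc : ‖x - y‖ ^ 2 ≤ (‖x‖ + ‖y‖) ^ 2 := by
    apply pow_le_pow_left₀ (norm_nonneg _) htri
  have hc0 : (0:ℝ) ≤ ‖x - y‖ ^ 2 := by positivity
  rcases le_total ‖y‖ ‖x‖ with h | h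
  · exact aux_scalar p ‖x‖ ‖y‖ (‖x - y‖ ^ 2) hp0 hp1 hypos h hc0 hc
  · have hc2 : ‖y - x‖ ^ 2 ≤ (‖y‖ + ‖x‖) ^ 2 := by
      rw [norm_sub_rev]; linarith [hc]
    have := aux_scalar p ‖y‖ ‖x‖ (‖y - x‖ ^ 2) hp0 hp1 hxpos h (by positivity) hc2
    have hrev : ‖y - x‖ = ‖x - y‖ := norm_sub_rev y x
    rw [hrev] at this
    calc (‖x‖ ^ (1 - p) - ‖y‖ ^ (1 - p)) ^ 2 / (‖x‖ ^ (1 - p) + ‖y‖ ^ (1 - p)) ^ 2 * ‖x - y‖ ^ 2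
          + (‖x‖ ^ (p + 1) * ‖y‖ ^ (1 - p) + ‖x‖ ^ (1 - p) * ‖y‖ ^ (p + 1))
        = (‖y‖ ^ (1 - p) - ‖x‖ ^ (1 - p)) ^ 2 / (‖y‖ ^ (1 - p) + ‖x‖ ^ (1 - p)) ^ 2 * ‖x - y‖ ^ 2
          + (‖y‖ ^ (p + 1) * ‖x‖ ^ (1 - p) + ‖y‖ ^ (1 - p) * ‖x‖ ^ (p + 1)) := by ring
      _ ≤ ‖y‖ ^ 2 + ‖x‖ ^ 2 := this
      _ = ‖x‖ ^ 2 + ‖y‖ ^ 2 := by ring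
end

section
/- Let X be a real normed space such that for all x, y ∈ X with ‖x‖ = ‖y‖ and all nonzero real γ, one has ‖x+y‖ ≤ ‖γx + γ⁻¹y‖. Then X is an inner product space, i.e., the norm satisfies the parallelogram law. -/
/-!
Lorch's condition, applied a second time to a suitably rescaled pair, forces
`‖a • x + b • y‖ = ‖b • x + a • y‖` whenever `‖x‖ = ‖y‖` and `a, b ≥ 0`. Hence the inversion
`x ↦ ‖x‖⁻² • x` distorts distances exactly as in a Euclidean space, and for a unit vector `v` the
function `F t = ‖x + t • v‖` satisfies `F t * F (t + k) = k * F (t + F t ^ 2 / k)` for `k > 0`.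
As `F t - t` decreases to a limit `σ`, this equation gives `F` the right derivative
`(t + σ) / F t`, so `F t ^ 2 - t ^ 2 - 2 σ t` is constant. The parallelogram law is the resulting
quadratic identity evaluated at `t = ± ‖y‖`.
-/

open Filter Topology Set

theorem exists_tendsto_norm_add_smul_sub {X : Type*} [NormedAddCommGroup X] [NormedSpace ℝ X]
    (x : X) {v : X} (hv : ‖v‖ = 1) : ∃ σ, Tendsto (fun r : ℝ ↦ ‖x + r • v‖ - r) atTop (𝓝 σ) := by
  have hanti : Antitone fun r : ℝ ↦ ‖x + r • v‖ - r := by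
    intro r s hrs
    have htri := norm_add_le (x + r • v) ((s - r) • v)
    rw [norm_smul, hv, mul_one, Real.norm_of_nonneg (sub_nonneg.2 hrs), add_assoc, ← add_smul,
      add_sub_cancel] at htri
    dsimp only
    linarith
  have hbdd : BddBelow (range fun r : ℝ ↦ ‖x + r • v‖ - r) := by
    refine ⟨-‖x‖, ?_⟩
    rintro _ ⟨r, rfl⟩
    have htri := norm_sub_le (x + r • v) x
    rw [add_sub_cancel_left, norm_smul, hv, mul_one, Real.norm_eq_abs] at htri
    linarith [le_abs_self r]
  exact ⟨_, tendsto_atTop_ciInf hanti hbdd⟩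

theorem hasDerivWithinAt_Ici_of_functional_eq {F : ℝ → ℝ} {σ t : ℝ} (ht : 0 < F t)
    (hlim : Tendsto (fun r ↦ F r - r) atTop (𝓝 σ))
    (hfe : ∀ k, 0 < k → F t * F (t + k) = k * F (t + F t ^ 2 / k)) :
    HasDerivWithinAt F ((t + σ) / F t) (Ici t) t := by
  rw [← hasDerivWithinAt_Ioi_iff_Ici, hasDerivWithinAt_iff_tendsto_slope' self_notMem_Ioi]
  -- With `k = s - t`, the equation writes the slope at `s` through `F (R s) - R s`, and `R s → ∞`.
  set R : ℝ → ℝ := fun s ↦ t + F t ^ 2 / (s - t)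
  have hR : Tendsto R (𝓝[>] t) atTop := by
    have hsub : Tendsto (fun s ↦ s - t) (𝓝[>] t) (𝓝[>] 0) := by
      refine tendsto_nhdsWithin_iff.2 ⟨?_, eventually_nhdsWithin_of_forall fun s hs ↦ ?_⟩
      · simpa using (continuous_sub_right t).continuousWithinAt.tendsto (s := Ioi t) (x := t)
      · exact sub_pos.2 (mem_Ioi.1 hs)
    exact tendsto_atTop_add_const_left _ t
      ((tendsto_inv_nhdsGT_zero.comp hsub).const_mul_atTop (by positivity))
  have hslope : ∀ s ∈ Ioi t, (t + (F (R s) - R s)) / F t = slope F t s := by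
    intro s hs
    have hk : 0 < s - t := sub_pos.2 hs
    have hfe_s := hfe (s - t) hk
    rw [add_sub_cancel] at hfe_s
    change _ = (s - t) * F (R s) at hfe_s
    rw [slope_def_field]
    generalize F (R s) = w at hfe_s ⊢
    simp only [R]
    field_simp
    linear_combination -hfe_s
  exact (((hlim.comp hR).const_add t).div_const (F t)).congr'
    (eventually_nhdsWithin_of_forall hslope)

theorem sq_eq_quadratic_of_functional_eq {F : ℝ → ℝ} {σ : ℝ} (hF : Continuous F)
    (hpos : ∀ t, 0 < F t)
    (hlim : Tendsto (fun r ↦ F r - r) atTop (𝓝 σ))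
    (hfe : ∀ t k, 0 < k → F t * F (t + k) = k * F (t + F t ^ 2 / k)) (t : ℝ) :
    F t ^ 2 = t ^ 2 + 2 * σ * t + F 0 ^ 2 := by
  set G : ℝ → ℝ := fun t ↦ F t ^ 2 - (t ^ 2 + 2 * σ * t)
  have hG : Continuous G := by fun_prop
  have hG' : ∀ x, HasDerivWithinAt G 0 (Ici x) x := by
    intro x
    have hF' := hasDerivWithinAt_Ici_of_functional_eq (hpos x) hlim (hfe x)
    have hquad := ((hasDerivAt_pow 2 x).add ((hasDerivAt_id x).const_mul (2 * σ))).hasDerivWithinAt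
      (s := Ici x)
    refine ((hF'.pow 2).sub hquad).congr_deriv ?_
    field_simp [(hpos x).ne']
    ring
  have hconst : G t = G 0 := by
    rcases le_total 0 t with h0 | h0
    · exact constant_of_has_deriv_right_zero hG.continuousOn (fun x _ ↦ hG' x) t ⟨h0, le_rfl⟩
    · exact (constant_of_has_deriv_right_zero hG.continuousOn (fun x _ ↦ hG' x) 0
        ⟨h0, le_rfl⟩).symm
  simp only [G] at hconst
  linarith

def LorchCondition (X : Type*) [NormedAddCommGroup X] [NormedSpace ℝ X] : Prop :=
  ∀ x y : X, ‖x‖ = ‖y‖ → ∀ γ : ℝ, γ ≠ 0 → ‖x + y‖ ≤ ‖γ • x + γ⁻¹ • y‖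

namespace LorchCondition

variable {X : Type*} [NormedAddCommGroup X] [NormedSpace ℝ X] {x y : X} {a b : ℝ}

theorem mul_mul_norm_add_sq_le (h : LorchCondition X) (hxy : ‖x‖ = ‖y‖) (ha : 0 ≤ a) (hb : 0 ≤ b) :
    a * b * ‖x + y‖ ^ 2 ≤ ‖a • x + b • y‖ ^ 2 := by
  rcases ha.eq_or_lt with rfl | ha
  · simp
  rcases hb.eq_or_lt with rfl | hb
  · simp
  obtain ⟨p, hp, rfl⟩ : ∃ p, 0 < p ∧ a = p ^ 2 := ⟨√a, by positivity, (Real.sq_sqrt ha.le).symm⟩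
  obtain ⟨q, hq, rfl⟩ : ∃ q, 0 < q ∧ b = q ^ 2 := ⟨√b, by positivity, (Real.sq_sqrt hb.le).symm⟩
  have hsplit : p ^ 2 • x + q ^ 2 • y = (p * q) • ((p / q) • x + (p / q)⁻¹ • y) := by
    match_scalars <;> field_simp
  calc p ^ 2 * q ^ 2 * ‖x + y‖ ^ 2 = (p * q * ‖x + y‖) ^ 2 := by ring
    _ ≤ (p * q * ‖(p / q) • x + (p / q)⁻¹ • y‖) ^ 2 := by
      gcongr
      exact h x y hxy _ (by positivity)
    _ = ‖p ^ 2 • x + q ^ 2 • y‖ ^ 2 := by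
      rw [hsplit, norm_smul, Real.norm_of_nonneg (by positivity)]

theorem norm_smul_add_smul_comm (h : LorchCondition X) (hxy : ‖x‖ = ‖y‖) (ha : 0 ≤ a) (hb : 0 ≤ b) :
    ‖a • x + b • y‖ = ‖b • x + a • y‖ := by
  rcases eq_or_ne (x + y) 0 with hs | hs
  · rw [← neg_eq_of_add_eq_zero_right hs, smul_neg, smul_neg, ← sub_eq_add_neg,
      ← sub_eq_add_neg, ← sub_smul, ← sub_smul, norm_smul, norm_smul, norm_sub_rev]
  rcases ha.eq_or_lt with rfl | ha
  · simp [norm_smul, hxy]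
  rcases hb.eq_or_lt with rfl | hb
  · simp [norm_smul, hxy]
  set A := ‖a • x + b • y‖
  set B := ‖b • x + a • y‖
  have hA := h.mul_mul_norm_add_sq_le hxy ha.le hb.le
  have hB := h.mul_mul_norm_add_sq_le hxy hb.le ha.le
  have hs' : 0 < a * b * ‖x + y‖ ^ 2 := by positivity
  have hApos : 0 < A := by nlinarith [norm_nonneg (a • x + b • y)]
  have hBpos : 0 < B := by nlinarith [norm_nonneg (b • x + a • y)]
  -- Rescale the two vectors to a common norm `A * B` and apply the weighted inequality to them.
  have hAB : ‖B • (a • x + b • y)‖ = ‖A • (b • x + a • y)‖ := by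
    rw [norm_smul, norm_smul, Real.norm_of_nonneg hApos.le, Real.norm_of_nonneg hBpos.le, mul_comm]
  have upper := h.mul_mul_norm_add_sq_le hAB hApos.le hBpos.le
  have lower := h.mul_mul_norm_add_sq_le hxy (a := B * a + A * b) (b := B * b + A * a)
    (by positivity) (by positivity)
  rw [show A • B • (a • x + b • y) + B • A • (b • x + a • y) = (A * B * (a + b)) • (x + y) by
    module, norm_smul, Real.norm_of_nonneg (by positivity)] at upper
  rw [show (B * a + A * b) • x + (B * b + A * a) • y = B • (a • x + b • y) + A • (b • x + a • y) by
    module] at lower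
  have key : A * B * (a * b * ‖x + y‖ ^ 2) * (A - B) ^ 2 ≤ 0 := by
    nlinarith [mul_le_mul_of_nonneg_left lower (by positivity : 0 ≤ A * B)]
  have hsq : (A - B) ^ 2 ≤ 0 := nonpos_of_mul_nonpos_right key (by positivity)
  nlinarith [sq_nonneg (A - B)]

-- Equivalently, inversion in the unit sphere satisfies `‖x' - y'‖ = ‖x - y‖ / (‖x‖ * ‖y‖)`.
theorem norm_sq_smul_add_sq_smul (h : LorchCondition X) (x y : X) :
    ‖‖y‖ ^ 2 • x + ‖x‖ ^ 2 • y‖ = ‖x‖ * ‖y‖ * ‖x + y‖ := by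
  rcases eq_or_ne x 0 with rfl | hx
  · simp
  rcases eq_or_ne y 0 with rfl | hy
  · simp
  have hx' : ‖x‖ ≠ 0 := norm_ne_zero_iff.2 hx
  have hy' : ‖y‖ ≠ 0 := norm_ne_zero_iff.2 hy
  have hcomm := h.norm_smul_add_smul_comm (x := ‖x‖⁻¹ • x) (y := ‖y‖⁻¹ • y) (a := ‖x‖) (b := ‖y‖)
    (by rw [norm_smul, norm_smul, norm_inv, norm_inv, norm_norm, norm_norm, inv_mul_cancel₀ hx',
      inv_mul_cancel₀ hy']) (norm_nonneg _) (norm_nonneg _)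
  rw [smul_inv_smul₀ hx', smul_inv_smul₀ hy'] at hcomm
  rw [hcomm, ← Real.norm_of_nonneg (by positivity : 0 ≤ ‖x‖ * ‖y‖), ← norm_smul]
  congr 1
  match_scalars <;> field_simp

theorem exists_norm_add_smul_sq (h : LorchCondition X) (x : X) {v : X} (hv : ‖v‖ = 1) :
    ∃ σ, ∀ t : ℝ, ‖x + t • v‖ ^ 2 = t ^ 2 + 2 * σ * t + ‖x‖ ^ 2 := by
  by_cases hline : ∃ s : ℝ, x + s • v = 0
  · obtain ⟨s, hs⟩ := hline
    refine ⟨-s, fun t ↦ ?_⟩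
    rw [eq_neg_of_add_eq_zero_left hs, ← neg_smul, ← add_smul, norm_smul, norm_smul, hv,
      Real.norm_eq_abs, Real.norm_eq_abs, mul_one, mul_one, sq_abs, sq_abs]
    ring
  simp only [not_exists] at hline
  obtain ⟨σ, hσ⟩ := exists_tendsto_norm_add_smul_sub x hv
  refine ⟨σ, fun t ↦ ?_⟩
  have hfe : ∀ t k : ℝ, 0 < k →
      ‖x + t • v‖ * ‖x + (t + k) • v‖ = k * ‖x + (t + ‖x + t • v‖ ^ 2 / k) • v‖ := by
    intro t k hk
    have hinv := h.norm_sq_smul_add_sq_smul (x + t • v) (k • v)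
    set N := ‖x + t • v‖
    have hscale : k ^ 2 • (x + t • v) + N ^ 2 • k • v = k ^ 2 • (x + (t + N ^ 2 / k) • v) := by
      match_scalars <;> field_simp
    rw [norm_smul, hv, mul_one, Real.norm_of_nonneg hk.le, hscale, norm_smul,
      Real.norm_of_nonneg (by positivity), add_assoc, ← add_smul] at hinv
    apply mul_left_cancel₀ hk.ne'
    linear_combination -hinv
  simpa using sq_eq_quadratic_of_functional_eq (F := fun t : ℝ ↦ ‖x + t • v‖) (by fun_prop)
    (fun t ↦ norm_pos_iff.2 (hline t)) hσ hfe t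

end LorchCondition

theorem lorch_characterization {X : Type*} [NormedAddCommGroup X] [NormedSpace ℝ X]
    (h : ∀ x y : X, ‖x‖ = ‖y‖ → ∀ γ : ℝ, γ ≠ 0 → ‖x + y‖ ≤ ‖γ • x + γ⁻¹ • y‖) :
    ∀ x y : X, ‖x + y‖ ^ 2 + ‖x - y‖ ^ 2 = 2 * ‖x‖ ^ 2 + 2 * ‖y‖ ^ 2 := by
  intro x y
  rcases eq_or_ne y 0 with rfl | hy
  · simp
    ring
  have hy' : ‖y‖ ≠ 0 := norm_ne_zero_iff.2 hy
  obtain ⟨σ, hσ⟩ := LorchCondition.exists_norm_add_smul_sq h x (v := ‖y‖⁻¹ • y)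
    (by rw [norm_smul, norm_inv, norm_norm, inv_mul_cancel₀ hy'])
  have hplus := hσ ‖y‖
  have hminus := hσ (-‖y‖)
  rw [smul_inv_smul₀ hy'] at hplus
  rw [neg_smul, smul_inv_smul₀ hy', ← sub_eq_add_neg] at hminus
  rw [hplus, hminus]
  ring
end

section
/- Let X be a real inner product space. Then for all x, y ∈ X with ‖x‖ = ‖y‖ and all nonzero real γ, ‖x+y‖ ≤ ‖γx + γ⁻¹y‖. -/
theorem norm_smul_add_inv_smul_sq {X : Type*} [NormedAddCommGroup X] [InnerProductSpace ℝ X]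
    (x y : X) {γ : ℝ} (hγ : γ ≠ 0) :
    ‖γ • x + γ⁻¹ • y‖ ^ 2 = ‖x + y‖ ^ 2 + (γ ^ 2 - 1) * ‖x‖ ^ 2 + (γ⁻¹ ^ 2 - 1) * ‖y‖ ^ 2 := by
  have hinner : inner ℝ (γ • x) (γ⁻¹ • y) = inner ℝ x y := by
    rw [real_inner_smul_left, real_inner_smul_right, ← mul_assoc, mul_inv_cancel₀ hγ, one_mul]
  rw [norm_add_sq_real, norm_add_sq_real, hinner, norm_smul, norm_smul, mul_pow, mul_pow,
    Real.norm_eq_abs, Real.norm_eq_abs, sq_abs, sq_abs]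
  ring

theorem lorch_easy {X : Type*} [NormedAddCommGroup X] [InnerProductSpace ℝ X]
    (x y : X) (h : ‖x‖ = ‖y‖) (γ : ℝ) (hγ : γ ≠ 0) :
    ‖x + y‖ ≤ ‖γ • x + γ⁻¹ • y‖ := by
  have hgap : ‖γ • x + γ⁻¹ • y‖ ^ 2 = ‖x + y‖ ^ 2 + (γ - γ⁻¹) ^ 2 * ‖y‖ ^ 2 := by
    have hγγ : γ * γ⁻¹ = 1 := mul_inv_cancel₀ hγ
    rw [norm_smul_add_inv_smul_sq x y hγ, h]
    linear_combination (2 * ‖y‖ ^ 2) * hγγ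
  refine (sq_le_sq₀ (norm_nonneg _) (norm_nonneg _)).mp ?_
  rw [hgap]
  exact le_add_of_nonneg_right (by positivity)
end

section
/- Let X be a real normed space, p ∈ (0,1), q > 0, and suppose that for all nonzero x, y ∈ X: α_p[x,y] ≤ 2^{1/q}·‖x−y‖/(‖x‖^{(1−p)q} + ‖y‖^{(1−p)q})^{1/q}. Then for all x, y ∈ X with ‖x‖ = ‖y‖ and all nonzero real γ, ‖x+y‖ ≤ ‖γx + γ⁻¹y‖. -/
/-!
Apply the hypothesis to `c • x` and `-(c⁻¹ • y)` with `c > 0`. Since `‖x‖ = ‖y‖`, the left side is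
`‖x‖^(p-1) ‖c^p • x + c^(-p) • y‖`, and by AM-GM `c^s + c^(-s) ≥ 2` the right side is at most
`‖x‖^(p-1) ‖c • x + c⁻¹ • y‖`. Hence `c ↦ ‖c • x + c⁻¹ • y‖` does not increase under `c ↦ c^p`;
iterating, `c^(p^n) → 1` and continuity give `‖x + y‖ ≤ ‖c • x + c⁻¹ • y‖`. Replacing `γ` by `|γ|`
only changes the sign of `γ • x + γ⁻¹ • y`.
-/

open Filter Topology

def AlphaBound (X : Type*) [NormedAddCommGroup X] [NormedSpace ℝ X] (p q : ℝ) : Prop :=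
  ∀ x y : X, x ≠ 0 → y ≠ 0 →
    ‖(‖x‖ ^ (p - 1)) • x - (‖y‖ ^ (p - 1)) • y‖ ≤
      2 ^ (1 / q) * ‖x - y‖ / (‖x‖ ^ ((1 - p) * q) + ‖y‖ ^ ((1 - p) * q)) ^ (1 / q)

lemma two_le_add_inv {t : ℝ} (ht : 0 < t) : 2 ≤ t + t⁻¹ := by
  have := mul_inv_cancel₀ ht.ne'
  nlinarith [sq_nonneg (t - 1), inv_pos.mpr ht]

lemma two_mul_rpow_le_mul_rpow_add_inv_mul_rpow {c r : ℝ} (hc : 0 < c) (hr : 0 ≤ r) (s : ℝ) :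
    2 * r ^ s ≤ (c * r) ^ s + (c⁻¹ * r) ^ s := by
  rw [Real.mul_rpow hc.le hr, Real.mul_rpow (inv_nonneg.mpr hc.le) hr, Real.inv_rpow hc.le]
  nlinarith [two_le_add_inv (Real.rpow_pos_of_pos hc s), Real.rpow_nonneg hr s]

lemma mul_rpow_sub_one_mul {c r : ℝ} (hc : 0 < c) (hr : 0 ≤ r) (p : ℝ) :
    (c * r) ^ (p - 1) * c = r ^ (p - 1) * c ^ p := by
  rw [Real.mul_rpow hc.le hr, mul_comm (c ^ (p - 1)), mul_assoc, Real.rpow_sub_one hc.ne',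
    div_mul_cancel₀ _ hc.ne']

lemma norm_smul_add_inv_smul_abs {X : Type*} [NormedAddCommGroup X] [Module ℝ X] (x y : X)
    (γ : ℝ) : ‖|γ| • x + |γ|⁻¹ • y‖ = ‖γ • x + γ⁻¹ • y‖ := by
  rcases le_or_gt 0 γ with hγ | hγ
  · rw [abs_of_nonneg hγ]
  · rw [abs_of_neg hγ, inv_neg, neg_smul, neg_smul, ← neg_add, norm_neg]

lemma apply_one_le_of_apply_rpow_le {g : ℝ → ℝ} {p : ℝ} (hp : |p| < 1) (hg : ContinuousAt g 1)
    (hdec : ∀ c, 0 < c → g (c ^ p) ≤ g c) {c : ℝ} (hc : 0 < c) : g 1 ≤ g c := by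
  have hiter : ∀ n : ℕ, g (c ^ (p ^ n)) ≤ g c := by
    intro n
    induction n with
    | zero => simp
    | succ n ih =>
      calc g (c ^ (p ^ (n + 1))) = g ((c ^ (p ^ n)) ^ p) := by
            rw [← Real.rpow_mul hc.le, ← pow_succ]
        _ ≤ g (c ^ (p ^ n)) := hdec _ (Real.rpow_pos_of_pos hc _)
        _ ≤ g c := ih
  have hlim : Tendsto (fun n : ℕ => c ^ (p ^ n)) atTop (𝓝 1) := by
    simpa [Function.comp_def] using ((Real.continuousAt_const_rpow hc.ne').tendsto.comp
      (tendsto_pow_atTop_nhds_zero_of_abs_lt_one hp))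
  exact le_of_tendsto (hg.tendsto.comp hlim) (Eventually.of_forall hiter)

section AlphaBound

variable {X : Type*} [NormedAddCommGroup X] [NormedSpace ℝ X] {p q : ℝ}

lemma AlphaBound.norm_rpow_smul_add_le (h : AlphaBound X p q) (hq : 0 < q) {x y : X}
    (hx : x ≠ 0) (hxy : ‖x‖ = ‖y‖) {c : ℝ} (hc : 0 < c) :
    ‖c ^ p • x + c ^ (-p) • y‖ ≤ ‖c • x + c⁻¹ • y‖ := by
  set r := ‖x‖
  set s := (1 - p) * q
  have hr : 0 < r := norm_pos_iff.mpr hx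
  have hy : y ≠ 0 := norm_pos_iff.mp (hxy ▸ hr)
  have hc' : 0 < c⁻¹ := inv_pos.mpr hc
  have hu : ‖c • x‖ = c * r := by rw [norm_smul, Real.norm_of_nonneg hc.le]
  have hv : ‖-(c⁻¹ • y)‖ = c⁻¹ * r := by rw [norm_neg, norm_smul, Real.norm_of_nonneg hc'.le, hxy]
  have hlhs : (c * r) ^ (p - 1) • (c • x) - (c⁻¹ * r) ^ (p - 1) • -(c⁻¹ • y) =
      r ^ (p - 1) • (c ^ p • x + c ^ (-p) • y) := by
    rw [smul_neg, sub_neg_eq_add, smul_smul, smul_smul, mul_rpow_sub_one_mul hc hr.le,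
      mul_rpow_sub_one_mul hc' hr.le, Real.inv_rpow hc.le, ← Real.rpow_neg hc.le, smul_add,
      smul_smul, smul_smul]
  have hbound := h _ _ (smul_ne_zero hc.ne' hx) (neg_ne_zero.mpr (smul_ne_zero hc'.ne' hy))
  rw [hu, hv, hlhs, sub_neg_eq_add, norm_smul, Real.norm_of_nonneg (by positivity)] at hbound
  set N := ‖c • x + c⁻¹ • y‖
  have hden : (2 * r ^ s) ^ (1 / q) ≤ ((c * r) ^ s + (c⁻¹ * r) ^ s) ^ (1 / q) :=
    Real.rpow_le_rpow (by positivity) (two_mul_rpow_le_mul_rpow_add_inv_mul_rpow hc hr.le s)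
      (by positivity)
  have hroot : (2 * r ^ s) ^ (1 / q) = 2 ^ (1 / q) * r ^ (1 - p) := by
    rw [Real.mul_rpow zero_le_two (by positivity), ← Real.rpow_mul hr.le]
    congr 2
    simp only [s]
    field_simp
  have hrp : r ^ (p - 1) * r ^ (1 - p) = 1 := by
    rw [← Real.rpow_add hr]
    simp
  have hrhs : 2 ^ (1 / q) * N / ((c * r) ^ s + (c⁻¹ * r) ^ s) ^ (1 / q) ≤ r ^ (p - 1) * N := by
    calc 2 ^ (1 / q) * N / ((c * r) ^ s + (c⁻¹ * r) ^ s) ^ (1 / q)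
        ≤ 2 ^ (1 / q) * N / (2 * r ^ s) ^ (1 / q) := by gcongr
      _ = r ^ (p - 1) * N := by
        rw [hroot, eq_comm, eq_div_iff (by positivity)]
        linear_combination (2 ^ (1 / q) * N) * hrp
  exact le_of_mul_le_mul_left (hbound.trans hrhs) (by positivity)

end AlphaBound

theorem key_step_thm5 {X : Type*} [NormedAddCommGroup X] [NormedSpace ℝ X]
    (p q : ℝ) (hp : p ∈ Set.Ioo (0:ℝ) 1) (hq : 0 < q)
    (h : ∀ x y : X, x ≠ 0 → y ≠ 0 →
      ‖(‖x‖ ^ (p - 1)) • x - (‖y‖ ^ (p - 1)) • y‖ ≤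
        2 ^ (1 / q) * ‖x - y‖ / (‖x‖ ^ ((1 - p) * q) + ‖y‖ ^ ((1 - p) * q)) ^ (1 / q)) :
    ∀ x y : X, ‖x‖ = ‖y‖ → ∀ γ : ℝ, γ ≠ 0 → ‖x + y‖ ≤ ‖γ • x + γ⁻¹ • y‖ := by
  intro x y hxy γ hγ
  rcases eq_or_ne x 0 with rfl | hx
  · obtain rfl : y = 0 := norm_eq_zero.mp (hxy ▸ norm_zero)
    simp
  have hp_abs : |p| < 1 := abs_lt.mpr ⟨by linarith [hp.1], hp.2⟩
  have hcont : ContinuousAt (fun c : ℝ => ‖c • x + c⁻¹ • y‖) 1 := by fun_prop (disch := norm_num)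
  have hmin := apply_one_le_of_apply_rpow_le hp_abs hcont
    (fun c hc => by simpa [Real.rpow_neg hc.le] using
      AlphaBound.norm_rpow_smul_add_le h hq hx hxy hc) (abs_pos.mpr hγ)
  simpa [norm_smul_add_inv_smul_abs] using hmin
end

section
/- Let X be a real normed space, p ∈ [0,1), and q > 0 such that for all nonzero x, y ∈ X: α_p[x,y] ≤ 2^{1/q}·‖x−y‖/(‖x‖^{(1−p)q} + ‖y‖^{(1−p)q})^{1/q}. Then X is an inner product space (the norm satisfies the parallelogram law). -/
/-!
By AM–GM the hypothesis gives `(‖x‖ ‖y‖) ^ ((1 - p) / 2) α_p[x, y] ≤ ‖x - y‖`. The maps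
`x ↦ x / ‖x‖ ^ (1 - p)` compose by multiplying exponents, so the exponents for which this bound
holds form a closed multiplicative set; with `p` it contains `lim pⁿ = 0`, which is Lorch's
inequality `√(ab) ‖u + v‖ ≤ ‖a u + b v‖` for unit `u, v`. Applying it twice yields Ficken's
property: `‖α u + β v‖ = ‖β u + α v‖` for unit `u, v`. Ficken's property makes the space strictly
convex, and in the plane of `u + v` and `u - v` it lets one halve angles on the curve
`cos θ d₁ + sin θ d₂`; by density of dyadic angles this curve is the unit sphere, so the norm is
Euclidean on every plane and the parallelogram law holds.
-/

open Filter Topology Set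

lemma two_rpow_mul_rpow_le_rpow_add {a b q : ℝ} (ha : 0 < a) (hb : 0 < b) (hq : 0 < q) (c : ℝ) :
    2 ^ (1 / q) * (a * b) ^ (c / 2) ≤ (a ^ (c * q) + b ^ (c * q)) ^ (1 / q) := by
  have hamgm := Real.geom_mean_le_arith_mean2_weighted (w₁ := 1/2) (w₂ := 1/2)
    (p₁ := a ^ (c * q)) (p₂ := b ^ (c * q)) (by norm_num) (by norm_num) (by positivity)
    (by positivity) (by norm_num)
  rw [← Real.mul_rpow (by positivity) (by positivity), ← Real.mul_rpow ha.le hb.le,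
    ← Real.rpow_mul (by positivity)] at hamgm
  calc 2 ^ (1 / q) * (a * b) ^ (c / 2)
      = (2 * (a * b) ^ (c * q * (1 / 2))) ^ (1 / q) := by
        rw [Real.mul_rpow (x := 2) (by norm_num) (by positivity),
          ← Real.rpow_mul (mul_pos ha hb).le]
        congr 2; field_simp
    _ ≤ (a ^ (c * q) + b ^ (c * q)) ^ (1 / q) := by gcongr; linarith

lemma eq_univ_of_isClosed_of_add_of_sub_of_half {S : Set ℝ} {c : ℝ} (hc : 0 < c)
    (hS : IsClosed S) (h₀ : 0 ∈ S) (hadd : ∀ θ ∈ S, θ + c ∈ S) (hsub : ∀ θ ∈ S, θ - c ∈ S)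
    (hhalf : ∀ θ ∈ S, θ ∈ Ico 0 (2 * c) → θ / 2 ∈ S) : S = univ := by
  have hint : ∀ θ ∈ S, ∀ j : ℤ, θ + j * c ∈ S := by
    intro θ hθ j
    induction j using Int.induction_on with
    | zero => simpa using hθ
    | succ j ih => simpa [add_mul, add_assoc] using hadd _ ih
    | pred j ih => simpa [sub_mul, add_sub_assoc] using hsub _ ih
  have hdyadic : ∀ (k : ℕ) (m : ℤ), (m : ℝ) * c / 2 ^ k ∈ S := by
    intro k
    induction k with
    | zero => intro m; simpa using hint 0 h₀ m
    | succ k ih =>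
      intro m
      have h2k : (0 : ℤ) < 2 ^ (k + 1) := by positivity
      set r := m % 2 ^ (k + 1)
      have hr₀ : (0 : ℝ) ≤ r := by exact_mod_cast Int.emod_nonneg m h2k.ne'
      have hr₁ : (r : ℝ) < 2 ^ (k + 1) := by exact_mod_cast Int.emod_lt_of_pos m h2k
      have hm : (m : ℝ) = r + 2 ^ (k + 1) * (m / 2 ^ (k + 1) : ℤ) := by
        exact_mod_cast (Int.emod_add_mul_ediv m (2 ^ (k + 1))).symm
      have hr : (r : ℝ) * c / 2 ^ k ∈ Ico 0 (2 * c) := by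
        refine ⟨by positivity, ?_⟩
        rw [div_lt_iff₀ (by positivity)]
        rw [pow_succ] at hr₁
        nlinarith
      convert hint _ (hhalf _ (ih r) hr) (m / 2 ^ (k + 1)) using 1
      rw [hm]
      field_simp
      ring
  refine eq_univ_of_forall fun θ => hS.mem_of_tendsto (b := atTop) (f := fun k : ℕ =>
    (⌊θ * 2 ^ k / c⌋ : ℝ) * c / 2 ^ k) ?_ (Eventually.of_forall fun k => hdyadic k _)
  have hlow : Tendsto (fun k : ℕ => θ - c / 2 ^ k) atTop (𝓝 θ) := by
    simpa [div_eq_mul_inv] using tendsto_const_nhds.sub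
      ((tendsto_pow_atTop_nhds_zero_of_lt_one (by norm_num : (0 : ℝ) ≤ 1 / 2)
        (by norm_num)).const_mul c)
  refine tendsto_of_tendsto_of_tendsto_of_le_of_le hlow tendsto_const_nhds (fun k => ?_) fun k => ?_
  · calc θ - c / 2 ^ k = (θ * 2 ^ k / c - 1) * c / 2 ^ k := by field_simp
      _ ≤ _ := by gcongr; exact (Int.sub_one_lt_floor _).le
  · calc (⌊θ * 2 ^ k / c⌋ : ℝ) * c / 2 ^ k ≤ θ * 2 ^ k / c * c / 2 ^ k := by
          gcongr; exact Int.floor_le _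
      _ = θ := by field_simp

section

variable {X : Type*} [NormedAddCommGroup X] [NormedSpace ℝ X]

lemma norm_inv_norm_smul {x : X} (hx : x ≠ 0) : ‖‖x‖⁻¹ • x‖ = 1 := by
  rw [norm_smul, norm_inv, norm_norm, inv_mul_cancel₀ (norm_ne_zero_iff.2 hx)]

lemma eq_one_of_norm_add_smul_sub_eq_one [StrictConvexSpace ℝ X] {x z : X} (hx : ‖x‖ = 1)
    (hz : ‖z‖ = 1) (hxz : x ≠ z) {t : ℝ} (ht : 0 < t) (h : ‖z + t • (x - z)‖ = 1) : t = 1 := by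
  rcases lt_trichotomy t 1 with ht1 | ht1 | ht1
  · have := norm_combo_lt_of_ne hx.le hz.le hxz ht (sub_pos.2 ht1) (add_sub_cancel t 1)
    rw [show t • x + (1 - t) • z = z + t • (x - z) by module, h] at this
    exact absurd this (lt_irrefl 1)
  · exact ht1
  · have hyz : z + t • (x - z) ≠ z := by
      simpa using smul_ne_zero ht.ne' (sub_ne_zero.2 hxz)
    have := norm_combo_lt_of_ne h.le hz.le hyz (inv_pos.2 ht)
      (sub_pos.2 (inv_lt_one_of_one_lt₀ ht1)) (add_sub_cancel _ 1)
    rw [show t⁻¹ • (z + t • (x - z)) + (1 - t⁻¹) • z = x by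
      rw [smul_add, smul_smul, inv_mul_cancel₀ ht.ne']; module, hx] at this
    exact absurd this (lt_irrefl 1)

/-- `x / ‖x‖ ^ (1 - p)`, so that the paper's `α_p[x, y]` is
`‖radialPow p x - radialPow p y‖`. -/
noncomputable def radialPow (p : ℝ) (x : X) : X := ‖x‖ ^ (p - 1) • x

lemma norm_radialPow (p : ℝ) {x : X} (hx : x ≠ 0) : ‖radialPow p x‖ = ‖x‖ ^ p := by
  rw [radialPow, norm_smul, Real.norm_of_nonneg (by positivity),
    ← Real.rpow_add_one (norm_ne_zero_iff.2 hx), sub_add_cancel]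

lemma radialPow_ne_zero (p : ℝ) {x : X} (hx : x ≠ 0) : radialPow p x ≠ 0 :=
  smul_ne_zero (Real.rpow_pos_of_pos (norm_pos_iff.2 hx) _).ne' hx

lemma radialPow_radialPow (p r : ℝ) {x : X} (hx : x ≠ 0) :
    radialPow p (radialPow r x) = radialPow (p * r) x := by
  rw [radialPow, norm_radialPow r hx, radialPow, radialPow, smul_smul,
    ← Real.rpow_mul (norm_nonneg x), ← Real.rpow_add (norm_pos_iff.2 hx)]
  ring_nf

def AngularBound (p : ℝ) (X : Type*) [NormedAddCommGroup X] [NormedSpace ℝ X] : Prop :=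
  ∀ x y : X, x ≠ 0 → y ≠ 0 →
    (‖x‖ * ‖y‖) ^ ((1 - p) / 2) * ‖radialPow p x - radialPow p y‖ ≤ ‖x - y‖

lemma angularBound_one : AngularBound 1 X := fun x y _ _ => by simp [radialPow]

lemma AngularBound.mul {p r : ℝ} (hp : AngularBound p X) (hr : AngularBound r X) :
    AngularBound (p * r) X := by
  intro x y hx hy
  have hN : 0 < ‖x‖ * ‖y‖ := by positivity
  have h := hp _ _ (radialPow_ne_zero r hx) (radialPow_ne_zero r hy)
  rw [norm_radialPow r hx, norm_radialPow r hy, radialPow_radialPow p r hx,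
    radialPow_radialPow p r hy, ← Real.mul_rpow (by positivity) (by positivity),
    ← Real.rpow_mul hN.le] at h
  calc (‖x‖ * ‖y‖) ^ ((1 - p * r) / 2) * ‖radialPow (p * r) x - radialPow (p * r) y‖
      = (‖x‖ * ‖y‖) ^ ((1 - r) / 2) * ((‖x‖ * ‖y‖) ^ (r * ((1 - p) / 2)) *
          ‖radialPow (p * r) x - radialPow (p * r) y‖) := by
        rw [← mul_assoc, ← Real.rpow_add hN]; ring_nf
    _ ≤ (‖x‖ * ‖y‖) ^ ((1 - r) / 2) * ‖radialPow r x - radialPow r y‖ := by gcongr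
    _ ≤ ‖x - y‖ := hr x y hx hy

lemma AngularBound.pow {p : ℝ} (hp : AngularBound p X) (n : ℕ) : AngularBound (p ^ n) X := by
  induction n with
  | zero => simpa using angularBound_one
  | succ n ih => rw [pow_succ']; exact hp.mul ih

lemma AngularBound.zero_of_mem_Ico {p : ℝ} (hp : AngularBound p X) (hp₀₁ : p ∈ Ico 0 1) :
    AngularBound 0 X := by
  intro x y hx hy
  have hcont : Continuous fun r : ℝ =>
      (‖x‖ * ‖y‖) ^ ((1 - r) / 2) * ‖radialPow r x - radialPow r y‖ := by
    unfold radialPow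
    have := norm_pos_iff.2 hx
    have := norm_pos_iff.2 hy
    fun_prop (disch := positivity)
  exact le_of_tendsto' ((hcont.tendsto 0).comp
    (tendsto_pow_atTop_nhds_zero_of_lt_one hp₀₁.1 hp₀₁.2)) fun n => hp.pow n x y hx hy

lemma angularBound_of_le {p q : ℝ} (hq : 0 < q)
    (h : ∀ x y : X, x ≠ 0 → y ≠ 0 → ‖radialPow p x - radialPow p y‖ ≤
      2 ^ (1 / q) * ‖x - y‖ / (‖x‖ ^ ((1 - p) * q) + ‖y‖ ^ ((1 - p) * q)) ^ (1 / q)) :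
    AngularBound p X := by
  intro x y hx hy
  have hx' := norm_pos_iff.2 hx
  have hy' := norm_pos_iff.2 hy
  have hmean := two_rpow_mul_rpow_le_rpow_add hx' hy' hq (1 - p)
  calc (‖x‖ * ‖y‖) ^ ((1 - p) / 2) * ‖radialPow p x - radialPow p y‖
      ≤ (‖x‖ * ‖y‖) ^ ((1 - p) / 2) *
          (2 ^ (1 / q) * ‖x - y‖ / (2 ^ (1 / q) * (‖x‖ * ‖y‖) ^ ((1 - p) / 2))) := by
        gcongr
        exact (h x y hx hy).trans (by gcongr)
    _ = ‖x - y‖ := by field_simp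

lemma AngularBound.sqrt_mul_mul_norm_add_le (h : AngularBound 0 X) {u v : X} (hu : ‖u‖ = 1)
    (hv : ‖v‖ = 1) {a b : ℝ} (ha : 0 < a) (hb : 0 < b) :
    √(a * b) * ‖u + v‖ ≤ ‖a • u + b • v‖ := by
  have hau : a • u ≠ 0 := smul_ne_zero ha.ne' (norm_ne_zero_iff.1 (by simp [hu]))
  have hbv : -(b • v) ≠ 0 := neg_ne_zero.2 (smul_ne_zero hb.ne' (norm_ne_zero_iff.1 (by simp [hv])))
  have key := h _ _ hau hbv
  simp only [radialPow, norm_neg, norm_smul, hu, hv, Real.norm_of_nonneg ha.le,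
    Real.norm_of_nonneg hb.le, mul_one, sub_neg_eq_add, zero_sub, sub_zero, Real.rpow_neg_one,
    smul_neg, smul_smul, inv_mul_cancel₀ ha.ne', inv_mul_cancel₀ hb.ne', one_smul] at key
  rwa [Real.sqrt_eq_rpow]

def FickenProperty (X : Type*) [NormedAddCommGroup X] [NormedSpace ℝ X] : Prop :=
  ∀ u v : X, ‖u‖ = 1 → ‖v‖ = 1 → ∀ α β : ℝ, ‖α • u + β • v‖ = ‖β • u + α • v‖

lemma add_smul_ne_zero_of_norm_eq_one {u v : X} (hu : ‖u‖ = 1) (hv : ‖v‖ = 1) (huv : u + v ≠ 0)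
    {s : ℝ} (hs : 0 < s) : u + s • v ≠ 0 := by
  intro h
  have hs1 : 1 = s := by
    simpa [hu, hv, norm_smul, abs_of_pos hs] using congrArg norm (eq_neg_of_add_eq_zero_left h)
  exact huv (by simpa [← hs1] using h)

lemma AngularBound.norm_add_smul_eq_norm_smul_add (h : AngularBound 0 X) {u v : X}
    (hu : ‖u‖ = 1) (hv : ‖v‖ = 1) {s : ℝ} (hs : 0 < s) : ‖u + s • v‖ = ‖s • u + v‖ := by
  rcases eq_or_ne (u + v) 0 with huv | huv
  · obtain rfl := eq_neg_of_add_eq_zero_left huv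
    rw [show -v + s • v = (s - 1) • v by module, show s • -v + v = -((s - 1) • v) by module,
      norm_neg]
  have hf : 0 < ‖u + s • v‖ := norm_pos_iff.2 (add_smul_ne_zero_of_norm_eq_one hu hv huv hs)
  have hm : 0 < ‖s • u + v‖ := norm_pos_iff.2 <| by
    rw [add_comm]; exact add_smul_ne_zero_of_norm_eq_one hv hu (by rwa [add_comm]) hs
  set f := ‖u + s • v‖
  set m := ‖s • u + v‖
  -- Lorch's inequality, for the directions of `u + s v`, `s u + v` and for `u`, `v`, gives
  -- `f m (f⁻¹ + s m⁻¹) (s f⁻¹ + m⁻¹) ≤ (1 + s) ^ 2`, that is `s (f - m) ^ 2 ≤ 0`.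
  have h₁ := h.sqrt_mul_mul_norm_add_le (norm_inv_norm_smul (norm_pos_iff.1 hf))
    (norm_inv_norm_smul (norm_pos_iff.1 hm)) hf hm
  rw [smul_inv_smul₀ hf.ne', smul_inv_smul₀ hm.ne',
    show u + s • v + (s • u + v) = (1 + s) • (u + v) by module, norm_smul,
    Real.norm_of_nonneg (by positivity)] at h₁
  have h₂ := h.sqrt_mul_mul_norm_add_le hu hv (a := f⁻¹ + s * m⁻¹) (b := s * f⁻¹ + m⁻¹)
    (by positivity) (by positivity)
  rw [show (f⁻¹ + s * m⁻¹) • u + (s * f⁻¹ + m⁻¹) • v = f⁻¹ • (u + s • v) + m⁻¹ • (s • u + v)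
    by module] at h₂
  have hroot : √(f * m * ((f⁻¹ + s * m⁻¹) * (s * f⁻¹ + m⁻¹))) ≤ 1 + s := by
    rw [Real.sqrt_mul (by positivity)]
    refine le_of_mul_le_mul_right ?_ (norm_pos_iff.2 huv)
    calc _ ≤ √(f * m) * ‖f⁻¹ • (u + s • v) + m⁻¹ • (s • u + v)‖ := by
          rw [mul_assoc]; gcongr
      _ ≤ _ := h₁
  rw [Real.sqrt_le_left (by positivity),
    show f * m * ((f⁻¹ + s * m⁻¹) * (s * f⁻¹ + m⁻¹)) = (m + s * f) * (s * m + f) / (f * m) by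
      field_simp, div_le_iff₀ (by positivity)] at hroot
  have hsq : s * (f - m) ^ 2 ≤ 0 := by linear_combination hroot
  have hsq' : (f - m) ^ 2 = 0 :=
    le_antisymm (nonpos_of_mul_nonpos_right (by linarith) hs) (sq_nonneg _)
  exact sub_eq_zero.1 (pow_eq_zero_iff two_ne_zero |>.1 hsq')

lemma AngularBound.fickenProperty (h : AngularBound 0 X) : FickenProperty X := by
  have hs : ∀ {u v : X}, ‖u‖ = 1 → ‖v‖ = 1 → ∀ s : ℝ, ‖u + s • v‖ = ‖s • u + v‖ := by
    intro u v hu hv s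
    rcases lt_trichotomy s 0 with hs | rfl | hs
    · have hv' : ‖-v‖ = 1 := by rwa [norm_neg]
      rw [show u + s • v = u + (-s) • -v by module, show s • u + v = -((-s) • u + -v) by module,
        norm_neg]
      exact h.norm_add_smul_eq_norm_smul_add hu hv' (neg_pos.2 hs)
    · simp [hu, hv]
    · exact h.norm_add_smul_eq_norm_smul_add hu hv hs
  intro u v hu hv α β
  rcases eq_or_ne α 0 with rfl | hα
  · simp [norm_smul, hu, hv]
  rw [show α • u + β • v = α • (u + (β / α) • v) by rw [smul_add, smul_smul, mul_div_cancel₀ _ hα],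
    show β • u + α • v = α • ((β / α) • u + v) by rw [smul_add, smul_smul, mul_div_cancel₀ _ hα],
    norm_smul, norm_smul, hs hu hv]

def ReflectionInvariant (e₁ e₂ : X) : Prop := ∀ a b : ℝ, ‖a • e₁ - b • e₂‖ = ‖a • e₁ + b • e₂‖

lemma ReflectionInvariant.smul {e₁ e₂ : X} (h : ReflectionInvariant e₁ e₂) (r s : ℝ) :
    ReflectionInvariant (r • e₁) (s • e₂) := fun a b => by
  simpa only [smul_smul] using h (a * r) (b * s)

lemma ReflectionInvariant.smul_add_smul_ne_zero {e₁ e₂ : X} (h : ReflectionInvariant e₁ e₂)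
    (he₁ : e₁ ≠ 0) {a : ℝ} (ha : a ≠ 0) (b : ℝ) : a • e₁ + b • e₂ ≠ 0 := by
  intro hab
  have hsub : a • e₁ - b • e₂ = 0 := norm_eq_zero.1 (by rw [h, hab, norm_zero])
  have : (2 * a) • e₁ = 0 := by rw [two_mul, add_smul, ← add_add_sub_cancel, hab, hsub, zero_add]
  exact smul_ne_zero (mul_ne_zero two_ne_zero ha) he₁ this

lemma FickenProperty.reflectionInvariant (hF : FickenProperty X) {u v : X} (hu : ‖u‖ = 1)
    (hv : ‖v‖ = 1) : ReflectionInvariant (u + v) (u - v) := fun a b => by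
  rw [show a • (u + v) - b • (u - v) = (a - b) • u + (a + b) • v by module,
    show a • (u + v) + b • (u - v) = (a + b) • u + (a - b) • v by module, hF u v hu hv]

lemma FickenProperty.strictConvexSpace (hF : FickenProperty X) : StrictConvexSpace ℝ X := by
  refine StrictConvexSpace.of_norm_add_ne_two fun U V hU hV hne hUV => hne ?_
  have hR := (hF.reflectionInvariant hU hV).smul 2⁻¹ 2⁻¹
  have hU' : U = (2⁻¹ : ℝ) • (U + V) + (2⁻¹ : ℝ) • (U - V) := by module
  set m : X := (2⁻¹ : ℝ) • (U + V)
  set e : X := (2⁻¹ : ℝ) • (U - V)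
  have hm : ‖m‖ = 1 := by rw [norm_smul, hUV]; norm_num
  have hUV' : U - V = (2 : ℝ) • e := by simp [e, smul_smul]
  clear_value m e
  -- Ficken's property for the unit vectors `m` and `m + c e` doubles `c`, so `‖m + 2 ^ k e‖ = 1`
  -- for all `k`, which bounds `2 ^ k ‖e‖`.
  have hdouble : ∀ c : ℝ, ‖m + c • e‖ = 1 → ‖m + (2 * c) • e‖ = 1 := by
    intro c hc
    calc ‖m + (2 * c) • e‖ = ‖(-1 : ℝ) • m + (2 : ℝ) • (m + c • e)‖ := by congr 1; module
      _ = ‖(2 : ℝ) • m + (-1 : ℝ) • (m + c • e)‖ := hF _ _ hm hc _ _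
      _ = ‖(1 : ℝ) • m - c • e‖ := by congr 1; module
      _ = 1 := by rw [hR, one_smul, hc]
  have hpow : ∀ k : ℕ, ‖m + (2 : ℝ) ^ k • e‖ = 1 := by
    intro k
    induction k with
    | zero => rw [pow_zero, one_smul, ← hU', hU]
    | succ k ih => rw [pow_succ', hdouble _ ih]
  have hbound : ∀ k : ℕ, (2 : ℝ) ^ k * ‖e‖ ≤ 2 := fun k => by
    calc (2 : ℝ) ^ k * ‖e‖ = ‖(m + (2 : ℝ) ^ k • e) - m‖ := by
          rw [add_sub_cancel_left, norm_smul, Real.norm_of_nonneg (by positivity)]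
      _ ≤ 2 := by linarith [norm_sub_le (m + (2 : ℝ) ^ k • e) m, hpow k, hm]
  have he : e = 0 := by
    by_contra he
    obtain ⟨k, hk⟩ := pow_unbounded_of_one_lt (2 / ‖e‖) one_lt_two
    have := hbound k
    rw [div_lt_iff₀ (norm_pos_iff.2 he)] at hk
    linarith
  rw [← sub_eq_zero, hUV', he, smul_zero]

open Real in
lemma FickenProperty.norm_cos_half_smul_add_sin_half_smul [StrictConvexSpace ℝ X]
    (hF : FickenProperty X) {d₁ d₂ : X} (hd₁ : ‖d₁‖ = 1) (hR : ReflectionInvariant d₁ d₂) {θ : ℝ}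
    (hθ : θ ∈ Ioo (-π) π) (h : ‖cos θ • d₁ + sin θ • d₂‖ = 1) :
    ‖cos (θ / 2) • d₁ + sin (θ / 2) • d₂‖ = 1 := by
  have hcos : cos θ = 2 * cos (θ / 2) ^ 2 - 1 := by rw [← cos_two_mul]; ring_nf
  have hsin : sin θ = 2 * sin (θ / 2) * cos (θ / 2) := by rw [← sin_two_mul]; ring_nf
  set c := cos (θ / 2)
  set s := sin (θ / 2)
  have hc : 0 < c := cos_pos_of_mem_Ioo ⟨by linarith [hθ.1], by linarith [hθ.2]⟩
  have hd₁0 : d₁ ≠ 0 := norm_ne_zero_iff.1 (by rw [hd₁]; exact one_ne_zero)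
  set m := ‖c • d₁ + s • d₂‖
  have hm : 0 < m := norm_pos_iff.2 (hR.smul_add_smul_ne_zero hd₁0 hc.ne' s)
  have hw : ‖(c / m) • d₁ + (s / m) • d₂‖ = 1 := by
    rw [show (c / m) • d₁ + (s / m) • d₂ = m⁻¹ • (c • d₁ + s • d₂) by module, norm_smul,
      norm_inv, norm_norm, inv_mul_cancel₀ hm.ne']
  -- Ficken's property for `d₁` and `m⁻¹ (c d₁ + s d₂)` puts `-d₁ + m⁻² (P + d₁)` on the unit
  -- sphere, where `P = cos θ d₁ + sin θ d₂`; since `-d₁` and `P` lie on it too, strict convexity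
  -- forces `m = 1`.
  have hline : ‖-d₁ + (m ^ 2)⁻¹ • (cos θ • d₁ + sin θ • d₂ - -d₁)‖ = 1 := by
    calc _ = ‖(-1 : ℝ) • d₁ + (2 * c / m) • ((c / m) • d₁ + (s / m) • d₂)‖ := by
          rw [hcos, hsin]; congr 1; match_scalars <;> field_simp; ring
      _ = ‖(2 * c / m) • d₁ + (-1 : ℝ) • ((c / m) • d₁ + (s / m) • d₂)‖ := hF _ _ hd₁ hw _ _
      _ = ‖(c / m) • d₁ - (s / m) • d₂‖ := by congr 1; module
      _ = 1 := by rw [hR, hw]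
  have hne : cos θ • d₁ + sin θ • d₂ ≠ -d₁ := by
    rw [Ne, ← sub_eq_zero, sub_neg_eq_add, show cos θ • d₁ + sin θ • d₂ + d₁ =
      (cos θ + 1) • d₁ + sin θ • d₂ by module]
    exact hR.smul_add_smul_ne_zero hd₁0 (by rw [hcos, sub_add_cancel]; positivity) _
  have ht := eq_one_of_norm_add_smul_sub_eq_one h (by rw [norm_neg, hd₁]) hne (by positivity) hline
  rwa [inv_eq_one, pow_eq_one_iff_of_nonneg hm.le two_ne_zero] at ht

open Real in
lemma FickenProperty.norm_cos_smul_add_sin_smul (hF : FickenProperty X) {d₁ d₂ : X}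
    (hd₁ : ‖d₁‖ = 1) (hd₂ : ‖d₂‖ = 1) (hR : ReflectionInvariant d₁ d₂) (θ : ℝ) :
    ‖cos θ • d₁ + sin θ • d₂‖ = 1 := by
  have := hF.strictConvexSpace
  have hswap : ∀ θ, ‖cos θ • d₁ + sin θ • d₂‖ = 1 → ‖sin θ • d₁ + cos θ • d₂‖ = 1 :=
    fun θ h => (hF d₁ d₂ hd₁ hd₂ _ _).symm.trans h
  have hS := eq_univ_of_isClosed_of_add_of_sub_of_half (S := {θ | ‖cos θ • d₁ + sin θ • d₂‖ = 1})
    (c := π / 2) (by positivity)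
    (isClosed_eq (by fun_prop) continuous_const)
    (by simp [hd₁])
    (fun θ hθ => by
      rw [mem_ofPred, cos_add_pi_div_two, sin_add_pi_div_two, neg_smul, ← norm_neg, neg_add,
        neg_neg, ← sub_eq_add_neg, hR]
      exact hswap θ hθ)
    (fun θ hθ => by
      rw [mem_ofPred, cos_sub_pi_div_two, sin_sub_pi_div_two, neg_smul, ← sub_eq_add_neg, hR]
      exact hswap θ hθ)
    (fun θ hθ hθ' => hF.norm_cos_half_smul_add_sin_half_smul hd₁ hR
      ⟨by linarith [hθ'.1, pi_pos], by linarith [hθ'.2]⟩ hθ)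
  exact eq_univ_iff_forall.1 hS θ

lemma FickenProperty.norm_smul_add_smul_sq (hF : FickenProperty X) {e₁ e₂ : X}
    (hR : ReflectionInvariant e₁ e₂) (a b : ℝ) :
    ‖a • e₁ + b • e₂‖ ^ 2 = a ^ 2 * ‖e₁‖ ^ 2 + b ^ 2 * ‖e₂‖ ^ 2 := by
  rcases eq_or_ne e₁ 0 with rfl | he₁
  · simp [norm_smul, mul_pow]
  rcases eq_or_ne e₂ 0 with rfl | he₂
  · simp [norm_smul, mul_pow]
  set z : ℂ := ⟨a * ‖e₁‖, b * ‖e₂‖⟩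
  have hcircle := hF.norm_cos_smul_add_sin_smul (norm_inv_norm_smul he₁)
    (norm_inv_norm_smul he₂) (hR.smul _ _) (Complex.arg z)
  have hpolar : a • e₁ + b • e₂ = ‖z‖ • (Real.cos (Complex.arg z) • ‖e₁‖⁻¹ • e₁ +
      Real.sin (Complex.arg z) • ‖e₂‖⁻¹ • e₂) := by
    rw [smul_add, smul_smul, smul_smul, smul_smul, smul_smul, Complex.norm_mul_cos_arg,
      Complex.norm_mul_sin_arg]
    simp [z, mul_assoc, mul_inv_cancel₀ (norm_ne_zero_iff.2 he₁),
      mul_inv_cancel₀ (norm_ne_zero_iff.2 he₂)]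
  rw [hpolar, norm_smul, hcircle, mul_one, norm_norm, Complex.sq_norm, Complex.normSq_mk]
  ring

lemma FickenProperty.parallelogram (hF : FickenProperty X) (x y : X) :
    ‖x + y‖ ^ 2 + ‖x - y‖ ^ 2 = 2 * ‖x‖ ^ 2 + 2 * ‖y‖ ^ 2 := by
  rcases eq_or_ne x 0 with rfl | hx
  · simp; ring
  rcases eq_or_ne y 0 with rfl | hy
  · simp; ring
  set u := ‖x‖⁻¹ • x
  set v := ‖y‖⁻¹ • y
  have hu := norm_inv_norm_smul hx
  have hv := norm_inv_norm_smul hy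
  have hcoord : ∀ a b : ℝ, ‖a • u + b • v‖ ^ 2 =
      ((a + b) / 2) ^ 2 * ‖u + v‖ ^ 2 + ((a - b) / 2) ^ 2 * ‖u - v‖ ^ 2 := fun a b => by
    rw [← hF.norm_smul_add_smul_sq (hF.reflectionInvariant hu hv)]
    congr 2; module
  have hsum : x + y = ‖x‖ • u + ‖y‖ • v := by
    rw [smul_inv_smul₀ (norm_ne_zero_iff.2 hx), smul_inv_smul₀ (norm_ne_zero_iff.2 hy)]
  have hdiff : x - y = ‖x‖ • u + (-‖y‖) • v := by
    rw [neg_smul, smul_inv_smul₀ (norm_ne_zero_iff.2 hx), smul_inv_smul₀ (norm_ne_zero_iff.2 hy),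
      sub_eq_add_neg]
  have hu1 := hcoord 1 0
  rw [one_smul, zero_smul, add_zero, hu] at hu1
  rw [hsum, hdiff, hcoord, hcoord]
  linear_combination (-2 * (‖x‖ ^ 2 + ‖y‖ ^ 2)) * hu1

end

theorem thm5 {X : Type*} [NormedAddCommGroup X] [NormedSpace ℝ X]
    (p q : ℝ) (hp : p ∈ Set.Ico (0:ℝ) 1) (hq : 0 < q)
    (h : ∀ x y : X, x ≠ 0 → y ≠ 0 →
      ‖(‖x‖ ^ (p - 1)) • x - (‖y‖ ^ (p - 1)) • y‖ ≤
        2 ^ (1 / q) * ‖x - y‖ / (‖x‖ ^ ((1 - p) * q) + ‖y‖ ^ ((1 - p) * q)) ^ (1 / q)) :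
    ∀ x y : X, ‖x + y‖ ^ 2 + ‖x - y‖ ^ 2 = 2 * ‖x‖ ^ 2 + 2 * ‖y‖ ^ 2 :=
  ((angularBound_of_le hq h).zero_of_mem_Ico hp).fickenProperty.parallelogram
end

section
/- Let X be a real normed space, p ∈ (0,1), q > 0, x, y nonzero elements of X with ‖x‖ = ‖y‖, and γ > 0. If α_p[u,v] ≤ 2^{1/q}‖u−v‖/(‖u‖^{(1−p)q}+‖v‖^{(1−p)q})^{1/q} holds for all nonzero u, v, then for every n ≥ 0: ((γ^{p^n(1−p)q} + γ^{−p^n(1−p)q})/2)^{1/q} · ‖γ^{p^{n+1}}x + γ^{−p^{n+1}}y‖ ≤ ‖γ^{p^n}x + γ^{−p^n}y‖. -/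
theorem iterative_ineq {X : Type*} [NormedAddCommGroup X] [NormedSpace ℝ X]
    (p q : ℝ) (hp : p ∈ Set.Ioo (0:ℝ) 1) (hq : 0 < q)
    (x y : X) (hx : x ≠ 0) (hy : y ≠ 0) (hxy : ‖x‖ = ‖y‖) (γ : ℝ) (hγ : 0 < γ)
    (h : ∀ u v : X, u ≠ 0 → v ≠ 0 →
      ‖(‖u‖ ^ (p - 1)) • u - (‖v‖ ^ (p - 1)) • v‖ ≤
        2 ^ (1 / q) * ‖u - v‖ / (‖u‖ ^ ((1 - p) * q) + ‖v‖ ^ ((1 - p) * q)) ^ (1 / q)) :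
    ∀ n : ℕ,
      ((γ ^ (p ^ n * ((1 - p) * q)) + γ ^ (-(p ^ n * ((1 - p) * q)))) / 2) ^ (1 / q) *
          ‖(γ ^ (p ^ (n + 1)) : ℝ) • x + (γ ^ (-(p ^ (n + 1))) : ℝ) • y‖ ≤
        ‖(γ ^ (p ^ n) : ℝ) • x + (γ ^ (-(p ^ n)) : ℝ) • y‖ := by
  intro n
  obtain ⟨hp0, hp1⟩ := hp
  set a : ℝ := p ^ n with ha
  have hγa : (0:ℝ) < γ ^ a := Real.rpow_pos_of_pos hγ a
  have hγb : (0:ℝ) < γ ^ (-a) := Real.rpow_pos_of_pos hγ (-a)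
  have hxpos : (0:ℝ) < ‖x‖ := norm_pos_iff.mpr hx
  have hu : (γ ^ a : ℝ) • x ≠ 0 := smul_ne_zero (ne_of_gt hγa) hx
  have hv : (-(γ ^ (-a) : ℝ)) • y ≠ 0 := smul_ne_zero (by linarith) hy
  have H := h ((γ ^ a : ℝ) • x) ((-(γ ^ (-a) : ℝ)) • y) hu hv
  have hnu : ‖(γ ^ a : ℝ) • x‖ = γ ^ a * ‖x‖ := by
    rw [norm_smul, Real.norm_of_nonneg hγa.le]
  have hnv : ‖(-(γ ^ (-a) : ℝ)) • y‖ = γ ^ (-a) * ‖y‖ := by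
    rw [norm_smul, norm_neg, Real.norm_of_nonneg hγb.le]
  rw [hnu, hnv, ← hxy] at H
  -- scalar identities
  have sc1 : (γ ^ a * ‖x‖) ^ (p - 1) * (γ ^ a) = ‖x‖ ^ (p - 1) * γ ^ (a * p) := by
    rw [Real.mul_rpow hγa.le hxpos.le, ← Real.rpow_mul hγ.le, mul_right_comm,
      ← Real.rpow_add hγ, show a * (p - 1) + a = a * p by ring, mul_comm]
  have sc2 : (γ ^ (-a) * ‖x‖) ^ (p - 1) * (γ ^ (-a)) = ‖x‖ ^ (p - 1) * γ ^ (-(a * p)) := by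
    rw [Real.mul_rpow hγb.le hxpos.le, ← Real.rpow_mul hγ.le, mul_right_comm,
      ← Real.rpow_add hγ, show (-a) * (p - 1) + -a = -(a * p) by ring, mul_comm]
  -- vector identity for the LHS of H
  have E : ((γ ^ a * ‖x‖) ^ (p - 1)) • ((γ ^ a : ℝ) • x)
      - ((γ ^ (-a) * ‖x‖) ^ (p - 1)) • ((-(γ ^ (-a) : ℝ)) • y)
      = (‖x‖ ^ (p - 1)) • ((γ ^ (a * p) : ℝ) • x + (γ ^ (-(a * p)) : ℝ) • y) := by
    rw [smul_smul, smul_smul, smul_add, smul_smul, smul_smul, sc1,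
      show (γ ^ (-a) * ‖x‖) ^ (p - 1) * (-(γ ^ (-a))) =
        -((γ ^ (-a) * ‖x‖) ^ (p - 1) * (γ ^ (-a))) by ring, sc2, neg_smul, sub_neg_eq_add]
  -- difference u - v
  have Ediff : (γ ^ a : ℝ) • x - (-(γ ^ (-a) : ℝ)) • y
      = (γ ^ a : ℝ) • x + (γ ^ (-a) : ℝ) • y := by
    rw [neg_smul, sub_neg_eq_add]
  set S : ℝ := γ ^ (a * ((1 - p) * q)) + γ ^ (-(a * ((1 - p) * q))) with hSdef
  have hSpos : 0 < S := by
    have := Real.rpow_pos_of_pos hγ (a * ((1 - p) * q))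
    have := Real.rpow_pos_of_pos hγ (-(a * ((1 - p) * q)))
    positivity
  have Eden : (γ ^ a * ‖x‖) ^ ((1 - p) * q) + (γ ^ (-a) * ‖x‖) ^ ((1 - p) * q)
      = ‖x‖ ^ ((1 - p) * q) * S := by
    rw [Real.mul_rpow hγa.le hxpos.le, Real.mul_rpow hγb.le hxpos.le,
      ← Real.rpow_mul hγ.le, ← Real.rpow_mul hγ.le,
      show (-a) * ((1 - p) * q) = -(a * ((1 - p) * q)) by ring, hSdef]
    ring
  rw [E, Ediff, Eden] at H
  rw [norm_smul, Real.norm_of_nonneg (Real.rpow_nonneg hxpos.le _)] at H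
  rw [Real.mul_rpow (Real.rpow_nonneg hxpos.le _) hSpos.le, ← Real.rpow_mul hxpos.le,
    show (1 - p) * q * (1 / q) = 1 - p by field_simp] at H
  set A : ℝ := ‖(γ ^ (a * p) : ℝ) • x + (γ ^ (-(a * p)) : ℝ) • y‖ with hA
  set B : ℝ := ‖(γ ^ a : ℝ) • x + (γ ^ (-a) : ℝ) • y‖ with hB
  have ht2 : (0:ℝ) < (2:ℝ) ^ (1 / q) := Real.rpow_pos_of_pos (by norm_num) _
  have hK : (0:ℝ) < ‖x‖ ^ (1 - p) * S ^ (1 / q) := by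
    have := Real.rpow_pos_of_pos hxpos (1 - p)
    have := Real.rpow_pos_of_pos hSpos (1 / q)
    positivity
  rw [le_div_iff₀ hK] at H
  have hone : ‖x‖ ^ (p - 1) * ‖x‖ ^ (1 - p) = 1 := by
    rw [← Real.rpow_add hxpos]; norm_num
  have H2 : A * S ^ (1 / q) ≤ 2 ^ (1 / q) * B := by
    calc A * S ^ (1 / q) = (‖x‖ ^ (p - 1) * ‖x‖ ^ (1 - p)) * (A * S ^ (1 / q)) := by
          rw [hone, one_mul]
      _ = ‖x‖ ^ (p - 1) * A * (‖x‖ ^ (1 - p) * S ^ (1 / q)) := by ring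
      _ ≤ 2 ^ (1 / q) * B := H
  rw [pow_succ, ← ha, Real.div_rpow hSpos.le (by norm_num : (0:ℝ) ≤ 2),
    div_mul_eq_mul_div, div_le_iff₀ ht2]
  calc S ^ (1 / q) * ‖(γ ^ (a * p) : ℝ) • x + (γ ^ (-(a * p)) : ℝ) • y‖
      = A * S ^ (1 / q) := by rw [hA]; ring
    _ ≤ 2 ^ (1 / q) * B := H2
    _ = B * 2 ^ (1 / q) := by ring
end

section
/- Let X be a real normed space in which for some q ∈ (0,1], the inequality ‖x/‖x‖ − y/‖y‖‖ ≤ 2^{1/q}·‖x−y‖/(‖x‖^q + ‖y‖^q)^{1/q} holds for all nonzero x, y ∈ X. Then X is an inner product space (the norm satisfies the parallelogram law). -/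
/-!
Power means dominate the geometric mean, so the hypothesis gives
`√(‖u‖ ‖v‖) ‖u / ‖u‖ - v / ‖v‖‖ ≤ ‖u - v‖`. For `u = (1 + s) a` and `v = -(1 - s) b` with
`‖a‖ = ‖b‖` this reads `√(1 - s²) ‖a + b‖ ≤ ‖a + b + s (a - b)‖`, and since the right side is
convex in `s`, the diagonal `a + b` of the rhombus spanned by `a, b` is Birkhoff orthogonal to the
other diagonal `a - b`.

Restrict the norm to the plane through `x` and `y`. For a direction `w` let `z` be a unit vector
Birkhoff orthogonal to `w`. Each chord of the unit sphere parallel to `w` has its midpoint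
Birkhoff orthogonal to `w`, hence on the line `ℝ z` as long as the sphere has no segment parallel
to `w`; so the skew reflection fixing `z` and reversing `w` maps the sphere to itself. Were there a
segment on the sphere, these reflections would produce segments in uncountably many directions,
while the directions of segments are countable; so there is one such isometric reflection for
every direction, and they act transitively on the sphere. The quadratic form of maximal
determinant below `N²` (the John–Loewner ellipse of the unit ball) is unique, hence invariant under
the reflections, hence constant on the unit sphere: `N²` is a quadratic form.
-/

open Set Filter

def BirkhoffOrth {E : Type*} [AddCommGroup E] [Module ℝ E] (N : E → ℝ) (x y : E) : Prop :=
  ∀ t : ℝ, N x ≤ N (x + t • y)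

section BirkhoffOrth

variable {E : Type*} [AddCommGroup E] [Module ℝ E] {N : Seminorm ℝ E} {x y : E}

theorem BirkhoffOrth.smul_left (h : BirkhoffOrth N x y) (c : ℝ) : BirkhoffOrth N (c • x) y := by
  intro t
  rcases eq_or_ne c 0 with rfl | hc
  · simp
  calc N (c • x) = |c| * N x := by rw [map_smul_eq_mul, Real.norm_eq_abs]
    _ ≤ |c| * N (x + (t / c) • y) := by gcongr; exact h _
    _ = N (c • x + t • y) := by
      rw [← Real.norm_eq_abs, ← map_smul_eq_mul, smul_add, smul_smul, mul_div_cancel₀ _ hc]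

theorem BirkhoffOrth.smul_right (h : BirkhoffOrth N x y) (c : ℝ) : BirkhoffOrth N x (c • y) := by
  intro t
  rw [smul_smul]
  exact h _

end BirkhoffOrth

namespace Seminorm

theorem continuous_of_finiteDimensional {F : Type*} [NormedAddCommGroup F] [NormedSpace ℝ F]
    [FiniteDimensional ℝ F] (N : Seminorm ℝ F) : Continuous N :=
  continuousOn_univ.mp (N.convexOn.continuousOn isOpen_univ)

variable {E : Type*} [AddCommGroup E] [Module ℝ E] (N : Seminorm ℝ E)

theorem abs_mul_sub_le_add_smul (v w : E) (t : ℝ) : |t| * N w - N v ≤ N (v + t • w) := by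
  have := map_sub_le_add N (v + t • w) v
  rw [add_sub_cancel_left, map_smul_eq_mul, Real.norm_eq_abs] at this
  linarith

theorem tendsto_add_smul_cocompact_atTop {w : E} (hw : 0 < N w) (v : E) :
    Tendsto (fun t : ℝ => N (v + t • w)) (cocompact ℝ) atTop :=
  tendsto_atTop_mono (fun t => N.abs_mul_sub_le_add_smul v w t) <|
    tendsto_atTop_add_const_right _ _ (tendsto_norm_cocompact_atTop.atTop_mul_const hw)

variable {N}

theorem eq_zero_of_forall_nat_apply_add_smul_eq {u v : E}
    (h : ∀ n : ℕ, N (v + (n : ℝ) • u) = N v) : N u = 0 := by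
  refine le_antisymm (le_of_not_gt fun hu => ?_) (apply_nonneg N u)
  obtain ⟨n, hn⟩ := exists_nat_gt (2 * N v / N u)
  have := N.abs_mul_sub_le_add_smul v u n
  rw [h n, Nat.abs_cast] at this
  rw [div_lt_iff₀ hu] at hn
  linarith

theorem add_smul_le_one {x a : E} (h₁ : N (x + a) ≤ 1) (h₂ : N (x - a) ≤ 1) {t : ℝ}
    (ht : |t| ≤ 1) : N (x + t • a) ≤ 1 := by
  obtain ⟨ht₁, ht₂⟩ := abs_le.mp ht
  have hx : x + t • a = ((1 + t) / 2) • (x + a) + ((1 - t) / 2) • (x - a) := by module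
  calc N (x + t • a) ≤ (1 + t) / 2 * N (x + a) + (1 - t) / 2 * N (x - a) := by
        rw [hx]
        refine (map_add_le_add N _ _).trans_eq ?_
        rw [map_smul_eq_mul, map_smul_eq_mul, Real.norm_of_nonneg (by linarith),
          Real.norm_of_nonneg (by linarith)]
    _ ≤ (1 + t) / 2 * 1 + (1 - t) / 2 * 1 := by gcongr; linarith
    _ = 1 := by ring

end Seminorm

namespace PlaneNorm

def cross : ℝ × ℝ →ₗ[ℝ] ℝ × ℝ →ₗ[ℝ] ℝ :=
  LinearMap.mk₂ ℝ (fun a b => a.1 * b.2 - a.2 * b.1)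
    (fun _ _ _ => by simp only [Prod.fst_add, Prod.snd_add]; ring)
    (fun _ _ _ => by simp only [Prod.smul_fst, Prod.smul_snd, smul_eq_mul]; ring)
    (fun _ _ _ => by simp only [Prod.fst_add, Prod.snd_add]; ring)
    (fun _ _ _ => by simp only [Prod.smul_fst, Prod.smul_snd, smul_eq_mul]; ring)

theorem cross_apply (a b : ℝ × ℝ) : cross a b = a.1 * b.2 - a.2 * b.1 := rfl

@[simp] theorem cross_self (a : ℝ × ℝ) : cross a a = 0 := by
  rw [cross_apply]; ring

theorem cross_swap (a b : ℝ × ℝ) : cross b a = -cross a b := by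
  simp only [cross_apply]; ring

theorem exists_eq_smul_of_cross_eq_zero {a w : ℝ × ℝ} (h : cross a w = 0) (hw : w ≠ 0) :
    ∃ c : ℝ, a = c • w := by
  rw [cross_apply] at h
  by_cases h1 : w.1 = 0
  · have h2 : w.2 ≠ 0 := fun h2 => hw (Prod.ext h1 h2)
    refine ⟨a.2 / w.2, Prod.ext ?_ ?_⟩
    · simp only [h1, mul_zero, sub_zero, mul_eq_zero, h2, or_false] at h
      simp [h, h1]
    · simp [h2]
  · refine ⟨a.1 / w.1, Prod.ext ?_ ?_⟩
    · simp [h1]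
    · simp only [Prod.smul_snd, smul_eq_mul]
      field_simp
      linarith

theorem eq_cross_div_smul_add {p q : ℝ × ℝ} (hpq : cross p q ≠ 0) (v : ℝ × ℝ) :
    v = (cross v q / cross p q) • p + (cross p v / cross p q) • q := by
  have key : cross p q • v = cross v q • p + cross p v • q := by
    ext <;> simp only [cross_apply, Prod.smul_fst, Prod.smul_snd, Prod.fst_add, Prod.snd_add,
      smul_eq_mul] <;> ring
  rw [div_eq_inv_mul, div_eq_inv_mul, mul_smul, mul_smul, ← smul_add, ← key, inv_smul_smul₀ hpq]

theorem cross_eq_zero_trans {a b c : ℝ × ℝ} (hab : cross a b = 0) (hbc : cross b c = 0)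
    (hb : b ≠ 0) : cross a c = 0 := by
  obtain ⟨α, rfl⟩ := exists_eq_smul_of_cross_eq_zero hab hb
  obtain ⟨γ, rfl⟩ := exists_eq_smul_of_cross_eq_zero (by rw [cross_swap, hbc, neg_zero]) hb
  simp

theorem cross_orth_ne_zero {w : ℝ × ℝ} (hw : w ≠ 0) : cross (-w.2, w.1) w ≠ 0 := by
  rw [cross_apply]
  intro h
  have h1 : w.1 = 0 := by nlinarith [sq_nonneg w.1, sq_nonneg w.2]
  have h2 : w.2 = 0 := by nlinarith [sq_nonneg w.1, sq_nonneg w.2]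
  exact hw (Prod.ext h1 h2)

theorem eq_fst_smul_add_snd_smul (f : ℝ × ℝ →ₗ[ℝ] ℝ × ℝ) (v : ℝ × ℝ) :
    f v = v.1 • f (1, 0) + v.2 • f (0, 1) := by
  rw [← map_smul, ← map_smul, ← map_add]
  congr 1
  ext <;> simp

/-- The linear reflection that fixes `z` and reverses `w`. -/
noncomputable def refl (z w : ℝ × ℝ) : ℝ × ℝ →ₗ[ℝ] ℝ × ℝ :=
  LinearMap.id - (2 / cross z w) • (cross z).smulRight w

theorem refl_apply (z w v : ℝ × ℝ) : refl z w v = v - (2 / cross z w * cross z v) • w := by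
  simp [refl, smul_smul]

section Refl

variable {z w : ℝ × ℝ} (hzw : cross z w ≠ 0)
include hzw

theorem refl_apply_right : refl z w w = -w := by
  rw [refl_apply, div_mul_cancel₀ _ hzw]; module

theorem cross_refl (v : ℝ × ℝ) : cross z (refl z w v) = -cross z v := by
  rw [refl_apply, map_sub, map_smul, smul_eq_mul, mul_assoc, mul_comm, mul_assoc,
    mul_div_cancel₀ _ hzw]
  ring

theorem refl_refl (v : ℝ × ℝ) : refl z w (refl z w v) = v := by
  rw [refl_apply z w (refl z w v), cross_refl hzw, refl_apply]
  module

theorem cross_refl_refl (u v : ℝ × ℝ) : cross (refl z w u) (refl z w v) = -cross u v := by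
  simp only [refl_apply, cross_apply, Prod.fst_sub, Prod.snd_sub, Prod.smul_fst,
    Prod.smul_snd, smul_eq_mul] at hzw ⊢
  field_simp
  ring

theorem cross_eq_zero_of_refl_apply_eq_self {v : ℝ × ℝ} (h : refl z w v = v) : cross z v = 0 := by
  rw [refl_apply, sub_eq_self, smul_eq_zero] at h
  rcases h with h | h
  · simpa [hzw] using h
  · simp [h] at hzw

end Refl

theorem cross_eq_zero_of_refl_apply_eq_neg {z w v : ℝ × ℝ} (h : refl z w v = -v) :
    cross v w = 0 := by
  rw [refl_apply] at h
  have h2 : (2 : ℝ) • v = (2 / cross z w * cross z v) • w := by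
    linear_combination (norm := module) h
  simpa using congrArg (cross · w) h2

section Definite

variable {N : Seminorm ℝ (ℝ × ℝ)}

theorem pos_of_ne_zero (hN : ∀ v, N v = 0 → v = 0) {v : ℝ × ℝ} (hv : v ≠ 0) : 0 < N v :=
  (apply_nonneg N v).lt_of_ne' (mt (hN v) hv)

theorem map_inv_smul_self (hN : ∀ v, N v = 0 → v = 0) {v : ℝ × ℝ} (hv : v ≠ 0) :
    N ((N v)⁻¹ • v) = 1 := by
  rw [map_smul_eq_mul, Real.norm_eq_abs, abs_inv, abs_of_pos (pos_of_ne_zero hN hv),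
    inv_mul_cancel₀ (pos_of_ne_zero hN hv).ne']

theorem map_eq_of_map_eq_one (hN : ∀ v, N v = 0 → v = 0) (T : ℝ × ℝ →ₗ[ℝ] ℝ × ℝ)
    (hT : ∀ v, N v = 1 → N (T v) = 1) (v : ℝ × ℝ) : N (T v) = N v := by
  rcases eq_or_ne v 0 with rfl | hv
  · simp
  have hpos := pos_of_ne_zero hN hv
  have := hT ((N v)⁻¹ • v) (map_inv_smul_self hN hv)
  rwa [map_smul, map_smul_eq_mul, Real.norm_of_nonneg (inv_nonneg.mpr hpos.le),
    inv_mul_eq_one₀ hpos.ne', eq_comm] at this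

end Definite

section Birkhoff

variable {N : Seminorm ℝ (ℝ × ℝ)}

/-- The supporting linear functional `cross · w / cross z w` given by a Birkhoff orthogonal
pair `z ⟂ w` has norm at most `1 / N z`. -/
theorem abs_cross_mul_le {z w : ℝ × ℝ} (hb : BirkhoffOrth N z w) (v : ℝ × ℝ) :
    |cross v w| * N z ≤ |cross z w| * N v := by
  by_cases hzw : cross z w = 0
  · rcases eq_or_ne w 0 with rfl | hw
    · simp
    obtain ⟨c, rfl⟩ := exists_eq_smul_of_cross_eq_zero hzw hw
    have : N (c • w) = 0 := le_antisymm (by simpa using hb (-c)) (apply_nonneg _ _)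
    rw [this, mul_zero]
    positivity
  set α := cross v w / cross z w
  calc |cross v w| * N z = |cross z w| * N (α • z) := by
        rw [map_smul_eq_mul, Real.norm_eq_abs, abs_div]
        field_simp
    _ ≤ |cross z w| * N (α • z + (cross z v / cross z w) • w) := by
        gcongr; exact hb.smul_left α _
    _ = |cross z w| * N v := by rw [← eq_cross_div_smul_add hzw v]

theorem exists_birkhoffOrth (hN : ∀ v, N v = 0 → v = 0) {w : ℝ × ℝ} (hw : w ≠ 0) :
    ∃ z, N z = 1 ∧ BirkhoffOrth N z w := by
  obtain ⟨t₀, ht₀⟩ := (N.continuous_of_finiteDimensional.comp (by fun_prop : Continuous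
    fun t : ℝ => ((-w.2, w.1) : ℝ × ℝ) + t • w)).exists_forall_le
    (N.tendsto_add_smul_cocompact_atTop (pos_of_ne_zero hN hw) _)
  set y : ℝ × ℝ := (-w.2, w.1) + t₀ • w
  have hy : y ≠ 0 := by
    intro h
    apply cross_orth_ne_zero hw
    have : cross y w = 0 := by rw [h, map_zero, LinearMap.zero_apply]
    simpa [y] using this
  have hby : BirkhoffOrth N y w := fun t => by
    have := ht₀ (t₀ + t)
    simp only [Function.comp_apply] at this
    rwa [add_smul, ← add_assoc] at this
  exact ⟨(N y)⁻¹ • y, map_inv_smul_self hN hy, hby.smul_left _⟩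

theorem cross_ne_zero_of_birkhoffOrth {z w : ℝ × ℝ} (hb : BirkhoffOrth N z w) (hz : N z ≠ 0)
    (hw : w ≠ 0) : cross z w ≠ 0 := by
  intro hzw
  have := abs_cross_mul_le hb (-w.2, w.1)
  rw [hzw, abs_zero, zero_mul] at this
  exact hz (le_antisymm (nonpos_of_mul_nonpos_right this
    (abs_pos.mpr (cross_orth_ne_zero hw))) (apply_nonneg N z))

theorem exists_abs_cross_le (hN : ∀ v, N v = 0 → v = 0) {w : ℝ × ℝ} (hw : w ≠ 0) :
    ∃ k > 0, ∀ v, |cross v w| ≤ k * N v := by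
  obtain ⟨z, hz, hb⟩ := exists_birkhoffOrth hN hw
  refine ⟨|cross z w|, abs_pos.mpr <|
    cross_ne_zero_of_birkhoffOrth hb (ne_of_eq_of_ne hz one_ne_zero) hw, fun v => ?_⟩
  simpa [hz] using abs_cross_mul_le hb v

theorem exists_ne_zero_map_add_smul_eq_one (hN : ∀ v, N v = 0 → v = 0) {v w : ℝ × ℝ}
    (hw : w ≠ 0) (hv : N v = 1) (hb : ¬ BirkhoffOrth N v w) :
    ∃ t : ℝ, t ≠ 0 ∧ N (v + t • w) = 1 := by
  obtain ⟨t₀, ht₀⟩ : ∃ t₀, N (v + t₀ • w) < 1 := by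
    simpa [BirkhoffOrth, hv] using hb
  have ht₀0 : t₀ ≠ 0 := by rintro rfl; simp [hv] at ht₀
  have hNw := pos_of_ne_zero hN hw
  set Λ := max 1 (2 / (|t₀| * N w))
  have hΛ : 1 ≤ Λ := le_max_left _ _
  have hg : Continuous fun l : ℝ => N (v + (l * t₀) • w) :=
    N.continuous_of_finiteDimensional.comp (by fun_prop)
  have hfar : 1 ≤ N (v + (Λ * t₀) • w) := by
    have := N.abs_mul_sub_le_add_smul v w (Λ * t₀)
    have h2 : 2 ≤ Λ * |t₀| * N w := by
      have := le_max_right 1 (2 / (|t₀| * N w))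
      rw [div_le_iff₀ (by positivity)] at this
      linarith
    rw [abs_mul, abs_of_pos (by linarith : (0 : ℝ) < Λ), hv] at this
    linarith
  obtain ⟨l, hl, hl1⟩ := intermediate_value_Icc hΛ hg.continuousOn
    ⟨by simpa using ht₀.le, hfar⟩
  exact ⟨l * t₀, mul_ne_zero (by linarith [hl.1]) ht₀0, hl1⟩

end Birkhoff

section Flat

variable {N : Seminorm ℝ (ℝ × ℝ)}

/-- The segment from `x - a` to `x + a` lies on the unit sphere (by convexity, it is enough that
its ends and midpoint do). -/
structure IsFlat (N : Seminorm ℝ (ℝ × ℝ)) (x a : ℝ × ℝ) : Prop where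
  ne_zero : a ≠ 0
  apply_sub : N (x - a) = 1
  apply_self : N x = 1
  apply_add : N (x + a) = 1

theorem IsFlat.apply_add_smul {x a : ℝ × ℝ} (h : IsFlat N x a) {t : ℝ} (ht : |t| ≤ 1) :
    N (x + t • a) = 1 := by
  refine le_antisymm (Seminorm.add_smul_le_one h.apply_add.le h.apply_sub.le ht) ?_
  have hneg : N (x - t • a) ≤ 1 := by
    simpa [sub_eq_add_neg] using Seminorm.add_smul_le_one h.apply_add.le h.apply_sub.le (t := -t)
      (by rwa [abs_neg])
  have h2 : N ((2 : ℝ) • x) ≤ N (x + t • a) + N (x - t • a) := by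
    rw [two_smul]
    simpa using map_add_le_add N (x + t • a) (x - t • a)
  rw [map_smul_eq_mul, h.apply_self, Real.norm_two] at h2
  linarith

theorem IsFlat.cross_ne_zero {x a : ℝ × ℝ} (h : IsFlat N x a) : cross x a ≠ 0 := by
  intro hxa
  obtain ⟨c, rfl⟩ := exists_eq_smul_of_cross_eq_zero hxa h.ne_zero
  have h₁ := h.apply_add
  have h₂ := h.apply_sub
  have h₀ := h.apply_self
  rw [show c • a + a = (c + 1) • a by module, map_smul_eq_mul] at h₁
  rw [show c • a - a = (c - 1) • a by module, map_smul_eq_mul] at h₂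
  rw [map_smul_eq_mul] at h₀
  simp only [Real.norm_eq_abs] at h₀ h₁ h₂
  have hc : |c + 1| = |c - 1| := by
    have hNa : N a ≠ 0 := by rintro h; simp [h] at h₁
    exact mul_right_cancel₀ hNa (by rw [h₁, h₂])
  have : c = 0 := by
    rcases abs_eq_abs.mp hc with h | h <;> linarith
  simp [this] at h₀

theorem IsFlat.map {x a : ℝ × ℝ} (h : IsFlat N x a) (T : ℝ × ℝ →ₗ[ℝ] ℝ × ℝ)
    (hT : ∀ v, N (T v) = N v) (hTa : T a ≠ 0) : IsFlat N (T x) (T a) :=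
  ⟨hTa, by rw [← map_sub, hT, h.apply_sub], by rw [hT, h.apply_self],
    by rw [← map_add, hT, h.apply_add]⟩

/-- Otherwise `(1 + η) y` would be a convex combination of points of the unit ball. -/
theorem cross_eq_zero_of_map_le_one {y a b : ℝ × ℝ} (hy : N y = 1) (ha₁ : N (y + a) ≤ 1)
    (ha₂ : N (y - a) ≤ 1) (hb₁ : N (y + b) ≤ 1) (hb₂ : N (y - b) ≤ 1) : cross a b = 0 := by
  by_contra hab
  set α := cross y b / cross a b
  set β := cross a y / cross a b
  have hyab : y = α • a + β • b := eq_cross_div_smul_add hab y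
  set η := 1 / (2 * (|α| + |β| + 1))
  have hη : 0 < η := by positivity
  have small : ∀ γ, |γ| ≤ |α| + |β| → |2 * η * γ| ≤ 1 := fun γ hγ => by
    rw [abs_mul, abs_of_pos (by positivity : (0 : ℝ) < 2 * η)]
    calc 2 * η * |γ| = |γ| / (|α| + |β| + 1) := by simp only [η]; field_simp
      _ ≤ 1 := by rw [div_le_one (by positivity)]; linarith
  have hsplit : (1 + η) • y = (1 / 2 : ℝ) • (y + (2 * η * α) • a) +
      (1 / 2 : ℝ) • (y + (2 * η * β) • b) := by
    rw [add_smul, one_smul]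
    nth_rewrite 2 [hyab]
    module
  have key : N ((1 + η) • y) ≤ 1 := by
    rw [hsplit]
    refine (map_add_le_add N _ _).trans ?_
    rw [map_smul_eq_mul, map_smul_eq_mul]
    have := Seminorm.add_smul_le_one ha₁ ha₂ (small α (by linarith [abs_nonneg β]))
    have := Seminorm.add_smul_le_one hb₁ hb₂ (small β (by linarith [abs_nonneg α]))
    norm_num
    linarith
  rw [map_smul_eq_mul, hy, Real.norm_of_nonneg (by positivity)] at key
  linarith

/-- The open cone over the open segment from `x - a` to `x + a`. -/
def cone (x a : ℝ × ℝ) : Set (ℝ × ℝ) := {v | |cross x v| * |cross x a| < cross v a * cross x a}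

theorem isOpen_cone (x a : ℝ × ℝ) : IsOpen (cone x a) :=
  isOpen_lt (by simp only [cross_apply]; fun_prop) (by simp only [cross_apply]; fun_prop)

theorem IsFlat.mem_cone {x a : ℝ × ℝ} (h : IsFlat N x a) : x ∈ cone x a := by
  simp only [cone, mem_ofPred_eq, cross_self, abs_zero, zero_mul]
  exact mul_self_pos.mpr h.cross_ne_zero

theorem IsFlat.exists_of_mem_cone {x a v : ℝ × ℝ} (h : IsFlat N x a) (hv : v ∈ cone x a) :
    ∃ t : ℝ, |t| < 1 ∧ (N v)⁻¹ • v = x + t • a := by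
  have hD := h.cross_ne_zero
  set l := cross v a / cross x a
  set m := cross x v / cross x a
  have hm : |m| < l := by
    have hD2 : 0 < cross x a ^ 2 := by positivity
    have := div_lt_div_of_pos_right hv hD2
    rwa [show |cross x v| * |cross x a| / cross x a ^ 2 = |m| by
        rw [abs_div, ← sq_abs (cross x a)]; field_simp,
      show cross v a * cross x a / cross x a ^ 2 = l by simp only [l]; field_simp] at this
  have hl : 0 < l := (abs_nonneg m).trans_lt hm
  have hvx : v = l • (x + (m / l) • a) := by
    rw [smul_add, smul_smul, mul_div_cancel₀ _ hl.ne']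
    exact eq_cross_div_smul_add hD v
  refine ⟨m / l, by rwa [abs_div, abs_of_pos hl, div_lt_one hl], ?_⟩
  rw [hvx, map_smul_eq_mul, h.apply_add_smul, Real.norm_of_nonneg hl.le, mul_one,
    inv_smul_smul₀ hl.ne']
  rw [abs_div, abs_of_pos hl, div_le_one hl]
  exact hm.le

theorem IsFlat.cross_eq_zero_of_mem_cone {x a x' a' v : ℝ × ℝ} (h : IsFlat N x a)
    (h' : IsFlat N x' a') (hv : v ∈ cone x a) (hv' : v ∈ cone x' a') : cross a a' = 0 := by
  obtain ⟨t, ht, hy⟩ := h.exists_of_mem_cone hv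
  obtain ⟨t', ht', hy'⟩ := h'.exists_of_mem_cone hv'
  have near : ∀ {x a : ℝ × ℝ} (t ε : ℝ), IsFlat N x a → |t| + |ε| ≤ 1 →
      N (x + t • a + ε • a) ≤ 1 ∧ N (x + t • a - ε • a) ≤ 1 := fun t ε hf hε => by
    constructor
    · rw [add_assoc, ← add_smul]
      exact (hf.apply_add_smul ((abs_add_le _ _).trans hε)).le
    · rw [add_sub_assoc, ← sub_smul]
      exact (hf.apply_add_smul ((abs_sub _ _).trans hε)).le
  have h₁ := near t (1 - |t|) h (by rw [abs_of_pos (sub_pos.mpr ht)]; linarith)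
  have h₂ := near t' (1 - |t'|) h' (by rw [abs_of_pos (sub_pos.mpr ht')]; linarith)
  rw [← hy] at h₁
  rw [← hy'] at h₂
  have := cross_eq_zero_of_map_le_one (by rw [hy]; exact h.apply_add_smul ht.le) h₁.1 h₁.2 h₂.1 h₂.2
  simpa [LinearMap.map_smul₂, (sub_pos.mpr ht).ne', (sub_pos.mpr ht').ne'] using this

def slopeVec (s : ℝ) : ℝ × ℝ := (1, s)

theorem slopeVec_ne_zero (s : ℝ) : slopeVec s ≠ 0 := fun h => one_ne_zero (congrArg Prod.fst h)

theorem cross_slopeVec (s s' : ℝ) : cross (slopeVec s) (slopeVec s') = s' - s := by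
  simp [slopeVec, cross_apply]

theorem subsingleton_setOf_cross_slopeVec_eq_zero {v : ℝ × ℝ} (hv : v ≠ 0) :
    {s : ℝ | cross v (slopeVec s) = 0}.Subsingleton := by
  intro s hs s' hs'
  simp only [mem_ofPred_eq, slopeVec, cross_apply, mul_one] at hs hs'
  by_contra hss'
  have h1 : v.1 = 0 := by
    have : v.1 * (s - s') = 0 := by linarith
    simpa [sub_ne_zero.mpr hss'] using this
  exact hv (Prod.ext h1 (by simpa [h1] using hs))

def flatSlopes (N : Seminorm ℝ (ℝ × ℝ)) : Set ℝ :=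
  {s | ∃ x a, IsFlat N x a ∧ cross a (slopeVec s) = 0}

/-- The open cones over the flat pieces of the sphere in different directions are disjoint. -/
theorem countable_flatSlopes : (flatSlopes N).Countable := by
  set U : ℝ → Set (ℝ × ℝ) := fun s =>
    ⋃ x, ⋃ a, ⋃ (_ : IsFlat N x a ∧ cross a (slopeVec s) = 0), cone x a
  refine Set.PairwiseDisjoint.countable_of_isOpen (s := U) ?_
    (fun s _ => isOpen_iUnion fun x => isOpen_iUnion fun a => isOpen_iUnion fun _ =>
      isOpen_cone x a) ?_
  · intro s _ s' _ hss'
    refine Set.disjoint_left.mpr fun v hv hv' => hss' ?_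
    simp only [U, mem_iUnion] at hv hv'
    obtain ⟨x, a, ⟨ha, has⟩, hv⟩ := hv
    obtain ⟨x', a', ⟨ha', has'⟩, hv'⟩ := hv'
    have h1 := cross_eq_zero_trans (by rw [cross_swap, has, neg_zero])
      (ha.cross_eq_zero_of_mem_cone ha' hv hv') ha.ne_zero
    have h2 := cross_eq_zero_trans h1 has' ha'.ne_zero
    rw [cross_slopeVec] at h2
    linarith
  · rintro s ⟨x, a, ha⟩
    exact ⟨x, mem_iUnion.mpr ⟨x, mem_iUnion.mpr ⟨a, mem_iUnion.mpr ⟨ha, ha.1.mem_cone⟩⟩⟩⟩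

theorem IsFlat.exists_cross_eq_zero {x a : ℝ × ℝ} (h : IsFlat N x a) :
    ∃ c ∈ insert ((0 : ℝ), (1 : ℝ)) (slopeVec '' flatSlopes N), cross a c = 0 := by
  by_cases h1 : a.1 = 0
  · exact ⟨(0, 1), mem_insert _ _, by simp [cross_apply, h1]⟩
  · have hσ : cross a (slopeVec (a.2 / a.1)) = 0 := by
      simp only [cross_apply, slopeVec]
      field_simp
      ring
    exact ⟨_, mem_insert_of_mem _ ⟨_, ⟨_, _, h, hσ⟩, rfl⟩, hσ⟩

structure NoFlatAlong (N : Seminorm ℝ (ℝ × ℝ)) (w : ℝ × ℝ) : Prop where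
  ne_zero : w ≠ 0
  cross_ne_zero : ∀ x a, IsFlat N x a → cross a w ≠ 0

theorem noFlatAlong_slopeVec {s : ℝ} (hs : s ∉ flatSlopes N) : NoFlatAlong N (slopeVec s) :=
  ⟨slopeVec_ne_zero s, fun x a h h0 => hs ⟨x, a, h, h0⟩⟩

theorem NoFlatAlong.eq_zero_of_birkhoffOrth {w z : ℝ × ℝ} (hw : NoFlatAlong N w) (hz : N z = 1)
    (hb : BirkhoffOrth N z w) {β : ℝ} (hβ : N (z + β • w) = 1) : β = 0 := by
  by_contra hβ0
  refine hw.cross_ne_zero (z + (β / 2) • w) ((β / 2) • w) ⟨?_, ?_, ?_, ?_⟩ (by simp)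
  · exact smul_ne_zero (by positivity) hw.ne_zero
  · rwa [add_sub_cancel_right]
  · refine le_antisymm ?_ (hz ▸ hb _)
    calc N (z + (β / 2) • w) = N ((1 / 2 : ℝ) • z + (1 / 2 : ℝ) • (z + β • w)) := by
          congr 1; module
      _ ≤ 1 := by
          refine (map_add_le_add N _ _).trans ?_
          rw [map_smul_eq_mul, map_smul_eq_mul, hz, hβ]
          norm_num
  · rwa [add_assoc, ← add_smul, add_halves]

/-- Otherwise the unit vectors `z, z'` in the directions of `y, y'` would lie on parallel
supporting lines, which the supporting functional `abs_cross_mul_le` shows to be the same or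
opposite lines; then `z` and `± z'` would bound a segment on the sphere parallel to `w`. -/
theorem NoFlatAlong.cross_eq_zero_of_birkhoffOrth (hN : ∀ v, N v = 0 → v = 0)
    {w y y' : ℝ × ℝ} (hw : NoFlatAlong N w) (hb : BirkhoffOrth N y w)
    (hb' : BirkhoffOrth N y' w) : cross y y' = 0 := by
  rcases eq_or_ne y 0 with rfl | hy
  · simp
  rcases eq_or_ne y' 0 with rfl | hy'
  · simp
  suffices h : cross ((N y)⁻¹ • y) ((N y')⁻¹ • y') = 0 by
    simpa [LinearMap.map_smul₂, (pos_of_ne_zero hN hy).ne', (pos_of_ne_zero hN hy').ne'] using h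
  set z := (N y)⁻¹ • y
  set z' := (N y')⁻¹ • y'
  have hz : N z = 1 := map_inv_smul_self hN hy
  have hz' : N z' = 1 := map_inv_smul_self hN hy'
  replace hb : BirkhoffOrth N z w := hb.smul_left _
  replace hb' : BirkhoffOrth N z' w := hb'.smul_left _
  clear_value z z'
  have hzw := cross_ne_zero_of_birkhoffOrth hb (ne_of_eq_of_ne hz one_ne_zero) hw.ne_zero
  set α := cross z' w / cross z w
  have hα : |α| = 1 := by
    have h₁ := abs_cross_mul_le hb z'
    have h₂ := abs_cross_mul_le hb' z
    simp only [hz, hz', mul_one] at h₁ h₂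
    rw [abs_div, div_eq_one_iff_eq (abs_pos.mpr hzw).ne']
    exact le_antisymm h₁ h₂
  have hαz' : α • z' = z + (α * (cross z z' / cross z w)) • w := by
    conv_lhs => rw [eq_cross_div_smul_add hzw z']
    rw [smul_add, smul_smul, smul_smul, ← sq, ← sq_abs, hα]
    simp
  have hβ := hw.eq_zero_of_birkhoffOrth hz hb
    (by rw [← hαz', map_smul_eq_mul, Real.norm_eq_abs, hα, hz', one_mul])
  rw [hβ, zero_smul, add_zero] at hαz'
  rw [← hαz']
  simp

end Flat

section Reflection

variable {N : Seminorm ℝ (ℝ × ℝ)}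

/-- By `hB` the midpoint of the chord from `u` to `v` is Birkhoff orthogonal to `w`, so the
reflection fixes it. -/
theorem refl_apply_eq_of_map_eq (hN : ∀ v, N v = 0 → v = 0)
    (hB : ∀ a b, N a = N b → BirkhoffOrth N (a + b) (a - b)) {z w : ℝ × ℝ}
    (hw : NoFlatAlong N w) (hz : N z = 1) (hb : BirkhoffOrth N z w) {u v : ℝ × ℝ}
    (huv : N u = N v) {c : ℝ} (hc : c ≠ 0) (hvu : v - u = c • w) : refl z w u = v := by
  have hzw := cross_ne_zero_of_birkhoffOrth hb (ne_of_eq_of_ne hz one_ne_zero) hw.ne_zero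
  have hsum : BirkhoffOrth N (u + v) w := by
    have := (hB u v huv).smul_right (-c)⁻¹
    rwa [← neg_sub, hvu, smul_neg, ← neg_smul, smul_smul, neg_inv, neg_neg,
      inv_mul_cancel₀ hc, one_smul] at this
  have hfix : refl z w (u + v) = u + v := by
    rw [refl_apply, hw.cross_eq_zero_of_birkhoffOrth hN hb hsum]
    simp
  have hflip : refl z w (v - u) = -(v - u) := by
    rw [hvu, map_smul, refl_apply_right hzw, smul_neg]
  rw [show u = (1 / 2 : ℝ) • (u + v) - (1 / 2 : ℝ) • (v - u) by module, map_sub, map_smul,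
    map_smul, hfix, hflip]
  module

theorem map_refl (hN : ∀ v, N v = 0 → v = 0)
    (hB : ∀ a b, N a = N b → BirkhoffOrth N (a + b) (a - b)) {z w : ℝ × ℝ}
    (hw : NoFlatAlong N w) (hz : N z = 1) (hb : BirkhoffOrth N z w) (v : ℝ × ℝ) :
    N (refl z w v) = N v := by
  refine map_eq_of_map_eq_one hN _ (fun v hv => ?_) v
  by_cases hbv : BirkhoffOrth N v w
  · rw [refl_apply, hw.cross_eq_zero_of_birkhoffOrth hN hb hbv]
    simpa using hv
  obtain ⟨t, ht, hvt⟩ := exists_ne_zero_map_add_smul_eq_one hN hw.ne_zero hv hbv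
  rw [refl_apply_eq_of_map_eq hN hB hw hz hb (hv.trans hvt.symm) ht (add_sub_cancel_left v _),
    hvt]

/-- Otherwise `T` is `±` a shear along `a`, whose powers are unbounded. -/
theorem eq_smul_of_map_eq (hN : ∀ v, N v = 0 → v = 0) (T : ℝ × ℝ →ₗ[ℝ] ℝ × ℝ)
    (hT : ∀ v, N (T v) = N v) (hdet : ∀ u v, cross (T u) (T v) = cross u v) {a : ℝ × ℝ}
    (ha : a ≠ 0) {μ : ℝ} (hTa : T a = μ • a) (v : ℝ × ℝ) : T v = μ • v := by
  have hNa := pos_of_ne_zero hN ha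
  have hμ : |μ| = 1 := by
    have := hT a
    rw [hTa, map_smul_eq_mul, Real.norm_eq_abs] at this
    exact (mul_eq_right₀ hNa.ne').mp this
  have hμμ : μ * μ = 1 := by rw [← abs_mul_abs_self, hμ, one_mul]
  set b : ℝ × ℝ := (-a.2, a.1)
  have hab : cross a b ≠ 0 := by rw [cross_swap]; exact neg_ne_zero.mpr (cross_orth_ne_zero ha)
  set α := cross (T b) b / cross a b
  have hTb : T b = α • a + (cross a (T b) / cross a b) • b := eq_cross_div_smul_add hab (T b)
  have hβ : cross a (T b) / cross a b = μ := by
    have := hdet a b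
    rw [hTa, LinearMap.map_smul₂, smul_eq_mul] at this
    rw [div_eq_iff hab]
    linear_combination μ * this - cross a (T b) * hμμ
  rw [hβ] at hTb
  have iter : ∀ n : ℕ, N (b + (n : ℝ) • ((μ * α) • a)) = N b := by
    intro n
    induction n with
    | zero => simp
    | succ k ih =>
      have e : T (b + (k : ℝ) • ((μ * α) • a)) = μ • (b + ((k + 1 : ℕ) : ℝ) • ((μ * α) • a)) := by
        rw [map_add, map_smul, map_smul, hTb, hTa]
        push_cast
        match_scalars
        · linear_combination (-α) * hμμ
        · ring
      rw [← ih, ← hT (b + (k : ℝ) • ((μ * α) • a)), e, map_smul_eq_mul, Real.norm_eq_abs, hμ,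
        one_mul]
  have hα : α = 0 := by
    have := hN _ (Seminorm.eq_zero_of_forall_nat_apply_add_smul_eq iter)
    simpa [ha, show μ ≠ 0 by rintro rfl; simp at hμ] using this
  rw [hα, zero_smul, zero_add] at hTb
  rw [eq_cross_div_smul_add hab v, map_add, map_smul, map_smul, hTa, hTb, smul_add,
    smul_comm μ, smul_comm μ]

/-- By `eq_smul_of_map_eq`, two reflections of this kind mapping `a` to parallel vectors agree
up to sign, which determines the direction `w` from `z₀` and `w₀`. -/
theorem cross_eq_zero_or_of_cross_refl_eq_zero (hN : ∀ v, N v = 0 → v = 0)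
    (hB : ∀ a b, N a = N b → BirkhoffOrth N (a + b) (a - b)) {z w z₀ w₀ a : ℝ × ℝ}
    (hw : NoFlatAlong N w) (hz : N z = 1) (hb : BirkhoffOrth N z w)
    (hw₀ : NoFlatAlong N w₀) (hz₀ : N z₀ = 1) (hb₀ : BirkhoffOrth N z₀ w₀) (ha : a ≠ 0)
    (hpar : cross (refl z w a) (refl z₀ w₀ a) = 0) : cross w w₀ = 0 ∨ cross z₀ w = 0 := by
  have hzw := cross_ne_zero_of_birkhoffOrth hb (ne_of_eq_of_ne hz one_ne_zero) hw.ne_zero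
  have hzw₀ := cross_ne_zero_of_birkhoffOrth hb₀ (ne_of_eq_of_ne hz₀ one_ne_zero) hw₀.ne_zero
  have hR := map_refl hN hB hw hz hb
  have hR₀ := map_refl hN hB hw₀ hz₀ hb₀
  have hR₀a : refl z₀ w₀ a ≠ 0 := fun h => ha (hN a (by rw [← hR₀, h, map_zero]))
  obtain ⟨κ, hκ⟩ := exists_eq_smul_of_cross_eq_zero hpar hR₀a
  have hT := eq_smul_of_map_eq hN (refl z₀ w₀ ∘ₗ refl z w) (fun v => by simp [hR, hR₀])
    (fun u v => by simp [cross_refl_refl hzw, cross_refl_refl hzw₀]) ha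
    (μ := κ) (by simp [hκ, refl_refl hzw₀]) w
  have hκ1 : |κ| = 1 := by
    have := hR a
    rw [hκ, map_smul_eq_mul, hR₀, Real.norm_eq_abs] at this
    exact (mul_eq_right₀ (pos_of_ne_zero hN ha).ne').mp this
  simp only [LinearMap.comp_apply, refl_apply_right hzw, map_neg] at hT
  rcases abs_eq (zero_le_one) |>.mp hκ1 with rfl | rfl
  · left
    exact cross_eq_zero_of_refl_apply_eq_neg (by simpa [neg_eq_iff_eq_neg] using hT)
  · right
    exact cross_eq_zero_of_refl_apply_eq_self hzw₀ (by simpa using hT)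

theorem countable_setOf_cross_refl_eq_zero (hN : ∀ v, N v = 0 → v = 0)
    (hB : ∀ a b, N a = N b → BirkhoffOrth N (a + b) (a - b)) {z : ℝ → ℝ × ℝ}
    (hz : ∀ s, N (z s) = 1) (hbz : ∀ s, BirkhoffOrth N (z s) (slopeVec s)) {a c : ℝ × ℝ}
    (ha : a ≠ 0) (hc : c ≠ 0) :
    {s | s ∉ flatSlopes N ∧ cross (refl (z s) (slopeVec s) a) c = 0}.Countable := by
  rcases Set.eq_empty_or_nonempty {s | s ∉ flatSlopes N ∧ cross (refl (z s) (slopeVec s) a) c = 0}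
    with h | ⟨s₀, hs₀, hs₀c⟩
  · rw [h]
    exact countable_empty
  refine (((subsingleton_setOf_cross_slopeVec_eq_zero (slopeVec_ne_zero s₀)).countable).union
    ((subsingleton_setOf_cross_slopeVec_eq_zero (v := z s₀) ?_).countable)).mono ?_
  · intro h
    simpa [h] using hz s₀
  rintro s ⟨hs, hsc⟩
  have hpar := cross_eq_zero_trans hsc (by rw [cross_swap, hs₀c, neg_zero]) hc
  rcases cross_eq_zero_or_of_cross_refl_eq_zero hN hB (noFlatAlong_slopeVec hs) (hz s) (hbz s)
    (noFlatAlong_slopeVec hs₀) (hz s₀) (hbz s₀) ha hpar with h | h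
  · left
    simp only [mem_ofPred_eq]
    rw [cross_swap, h, neg_zero]
  · exact Or.inr h

/-- The reflections attached to the uncountably many directions without flat pieces would move
a flat piece to flat pieces in uncountably many directions. -/
theorem not_isFlat (hN : ∀ v, N v = 0 → v = 0)
    (hB : ∀ a b, N a = N b → BirkhoffOrth N (a + b) (a - b)) (x a : ℝ × ℝ) :
    ¬ IsFlat N x a := by
  intro hxa
  choose z hz hbz using fun s => exists_birkhoffOrth hN (slopeVec_ne_zero s)
  have hC : ∀ c ∈ insert ((0 : ℝ), (1 : ℝ)) (slopeVec '' flatSlopes N), c ≠ 0 := by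
    rintro c (rfl | ⟨s, -, rfl⟩)
    · simp
    · exact slopeVec_ne_zero s
  have hflat : (flatSlopes N).Countable := countable_flatSlopes
  apply Cardinal.not_countable_real
  refine (hflat.union (((hflat.image slopeVec).insert _).biUnion
    fun c hc => countable_setOf_cross_refl_eq_zero hN hB hz hbz hxa.ne_zero (hC c hc))).mono
    fun s _ => ?_
  by_cases hs : s ∈ flatSlopes N
  · exact Or.inl hs
  have hR := map_refl hN hB (noFlatAlong_slopeVec hs) (hz s) (hbz s)
  have hRa : refl (z s) (slopeVec s) a ≠ 0 := fun h =>
    hxa.ne_zero (hN a (by rw [← hR, h, map_zero]))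
  obtain ⟨c, hc, h⟩ := (hxa.map _ hR hRa).exists_cross_eq_zero
  exact Or.inr (mem_biUnion hc ⟨hs, h⟩)

end Reflection

section QuadraticForm

def quadForm (M : ℝ × ℝ × ℝ) (v : ℝ × ℝ) : ℝ :=
  M.1 * v.1 ^ 2 + 2 * M.2.1 * v.1 * v.2 + M.2.2 * v.2 ^ 2

def quadDet (M : ℝ × ℝ × ℝ) : ℝ := M.1 * M.2.2 - M.2.1 ^ 2

def polar (M : ℝ × ℝ × ℝ) (u v : ℝ × ℝ) : ℝ :=
  M.1 * u.1 * v.1 + M.2.1 * (u.1 * v.2 + u.2 * v.1) + M.2.2 * u.2 * v.2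

/-- The coefficients of the quadratic form `v ↦ quadForm M (T v)`. -/
def pullback (M : ℝ × ℝ × ℝ) (T : ℝ × ℝ →ₗ[ℝ] ℝ × ℝ) : ℝ × ℝ × ℝ :=
  (quadForm M (T (1, 0)), polar M (T (1, 0)) (T (0, 1)), quadForm M (T (0, 1)))

theorem quadForm_smul (M : ℝ × ℝ × ℝ) (c : ℝ) (v : ℝ × ℝ) :
    quadForm M (c • v) = c ^ 2 * quadForm M v := by
  simp only [quadForm, Prod.smul_fst, Prod.smul_snd, smul_eq_mul]; ring

theorem quadForm_add_add_quadForm_sub (M : ℝ × ℝ × ℝ) (a b : ℝ × ℝ) :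
    quadForm M (a + b) + quadForm M (a - b) = 2 * quadForm M a + 2 * quadForm M b := by
  simp only [quadForm, Prod.fst_add, Prod.snd_add, Prod.fst_sub, Prod.snd_sub]; ring

theorem quadForm_pullback (M : ℝ × ℝ × ℝ) (T : ℝ × ℝ →ₗ[ℝ] ℝ × ℝ) (v : ℝ × ℝ) :
    quadForm (pullback M T) v = quadForm M (T v) := by
  rw [eq_fst_smul_add_snd_smul T v]
  simp only [pullback, quadForm, polar, Prod.fst_add, Prod.snd_add, Prod.smul_fst,
    Prod.smul_snd, smul_eq_mul]
  ring

theorem quadDet_pullback (M : ℝ × ℝ × ℝ) (T : ℝ × ℝ →ₗ[ℝ] ℝ × ℝ) :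
    quadDet (pullback M T) = quadDet M * cross (T (1, 0)) (T (0, 1)) ^ 2 := by
  simp only [pullback, quadDet, quadForm, polar, cross_apply]
  ring

theorem quadForm_pos {M : ℝ × ℝ × ℝ} (hM : 0 ≤ M.1) (hdet : 0 < quadDet M) {v : ℝ × ℝ}
    (hv : v ≠ 0) : 0 < quadForm M v := by
  simp only [quadDet] at hdet
  have hM1 : 0 < M.1 := hM.lt_of_ne' (by rintro h; rw [h] at hdet; nlinarith [sq_nonneg M.2.1])
  have key : M.1 * quadForm M v = (M.1 * v.1 + M.2.1 * v.2) ^ 2 + quadDet M * v.2 ^ 2 := by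
    simp only [quadForm, quadDet]; ring
  by_cases h2 : v.2 = 0
  · have h1 : v.1 ≠ 0 := fun h1 => hv (Prod.ext h1 h2)
    simp only [quadForm, h2]
    have := sq_pos_of_ne_zero h1
    nlinarith
  · have : 0 < M.1 * quadForm M v := by
      rw [key]
      have := mul_pos hdet (sq_pos_of_ne_zero h2)
      unfold quadDet
      nlinarith [sq_nonneg (M.1 * v.1 + M.2.1 * v.2)]
    exact pos_of_mul_pos_right this hM1.le

/-- The equality case of Minkowski's determinant inequality for `2 × 2` forms. -/
theorem eq_of_quadDet_midpoint_le {M₁ M₂ : ℝ × ℝ × ℝ} {m : ℝ} (h₁ : 0 ≤ M₁.1) (h₂ : 0 ≤ M₂.1)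
    (hd₁ : quadDet M₁ = m) (hd₂ : quadDet M₂ = m) (hm : 0 < m)
    (hmid : quadDet ((1 / 2 : ℝ) • (M₁ + M₂)) ≤ m) : M₁ = M₂ := by
  obtain ⟨p₁, q₁, r₁⟩ := M₁
  obtain ⟨p₂, q₂, r₂⟩ := M₂
  simp only [quadDet, Prod.smul_mk, Prod.mk_add_mk, smul_eq_mul] at hd₁ hd₂ hmid h₁ h₂
  have hp₁ : 0 < p₁ := h₁.lt_of_ne' (by rintro rfl; nlinarith [sq_nonneg q₁])
  have hp₂ : 0 < p₂ := h₂.lt_of_ne' (by rintro rfl; nlinarith [sq_nonneg q₂])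
  have key : m * (p₁ - p₂) ^ 2 + (p₁ * q₂ - p₂ * q₁) ^ 2
      = p₁ * p₂ * ((p₁ * r₂ + p₂ * r₁ - 2 * q₁ * q₂) - 2 * m) := by
    linear_combination (-(p₁ ^ 2)) * hd₂ + (-(p₂ ^ 2)) * hd₁
  have hle : p₁ * r₂ + p₂ * r₁ - 2 * q₁ * q₂ - 2 * m ≤ 0 := by nlinarith
  have hsum : m * (p₁ - p₂) ^ 2 + (p₁ * q₂ - p₂ * q₁) ^ 2 ≤ 0 := by
    rw [key]; exact mul_nonpos_of_nonneg_of_nonpos (by positivity) hle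
  have hp : p₁ = p₂ := by
    have : (p₁ - p₂) ^ 2 ≤ 0 := by nlinarith [sq_nonneg (p₁ * q₂ - p₂ * q₁)]
    nlinarith [sq_nonneg (p₁ - p₂)]
  subst hp
  have hq : q₁ = q₂ := by
    have : (p₁ * (q₂ - q₁)) ^ 2 ≤ 0 := by nlinarith [sq_nonneg (p₁ - p₁)]
    have := pow_eq_zero_iff (n := 2) (by norm_num) |>.mp (le_antisymm this (sq_nonneg _))
    rcases mul_eq_zero.mp this with h | h
    · linarith
    · linarith
  subst hq
  have hr : r₁ = r₂ := mul_left_cancel₀ hp₁.ne' (by linarith)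
  rw [hr]

def formsBelow (N : ℝ × ℝ → ℝ) : Set (ℝ × ℝ × ℝ) :=
  {M | ∀ v, 0 ≤ quadForm M v ∧ quadForm M v ≤ N v ^ 2}

theorem midpoint_mem_formsBelow {N : ℝ × ℝ → ℝ} {M₁ M₂ : ℝ × ℝ × ℝ} (h₁ : M₁ ∈ formsBelow N)
    (h₂ : M₂ ∈ formsBelow N) : (1 / 2 : ℝ) • (M₁ + M₂) ∈ formsBelow N := by
  intro v
  have e : quadForm ((1 / 2 : ℝ) • (M₁ + M₂)) v = (quadForm M₁ v + quadForm M₂ v) / 2 := by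
    simp only [quadForm, Prod.smul_fst, Prod.smul_snd, Prod.fst_add, Prod.snd_add, smul_eq_mul]
    ring
  rw [e]
  constructor <;> linarith [h₁ v, h₂ v]

theorem isCompact_formsBelow (N : ℝ × ℝ → ℝ) : IsCompact (formsBelow N) := by
  have hclosed : IsClosed (formsBelow N) := by
    simp only [formsBelow, ofPred_forall, ofPred_and]
    refine isClosed_iInter fun v => (isClosed_le continuous_const ?_).inter
      (isClosed_le ?_ continuous_const) <;> · simp only [quadForm]; fun_prop
  set K := N (1, 0) ^ 2 + N (0, 1) ^ 2 + N (1, 1) ^ 2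
  have hbox : IsCompact (Icc (-K) K ×ˢ (Icc (-K) K ×ˢ Icc (-K) K)) :=
    isCompact_Icc.prod (isCompact_Icc.prod isCompact_Icc)
  refine hbox.of_isClosed_subset hclosed fun M hM => ?_
  have e₁ := hM (1, 0)
  have e₂ := hM (0, 1)
  have e₃ := hM (1, 1)
  have e₄ := hM (1, -1)
  simp only [quadForm] at e₁ e₂ e₃ e₄
  norm_num at e₁ e₂ e₃ e₄
  have := sq_nonneg (N (1, 0))
  have := sq_nonneg (N (0, 1))
  have := sq_nonneg (N (1, 1))
  refine ⟨⟨?_, ?_⟩, ⟨?_, ?_⟩, ⟨?_, ?_⟩⟩ <;> linarith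

end QuadraticForm

section Ellipse

variable {N : Seminorm ℝ (ℝ × ℝ)}

theorem exists_mem_formsBelow_quadDet_pos (hN : ∀ v, N v = 0 → v = 0) :
    ∃ M ∈ formsBelow N, 0 < quadDet M := by
  obtain ⟨k₁, hk₁, h₁⟩ := exists_abs_cross_le hN (w := ((1 : ℝ), (0 : ℝ))) (by simp)
  obtain ⟨k₂, hk₂, h₂⟩ := exists_abs_cross_le hN (w := ((0 : ℝ), (1 : ℝ))) (by simp)
  refine ⟨(1 / (2 * k₂ ^ 2), 0, 1 / (2 * k₁ ^ 2)), fun v => ⟨?_, ?_⟩, ?_⟩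
  · simp only [quadForm, mul_zero, zero_mul, add_zero]
    positivity
  · have e₁ : v.2 ^ 2 ≤ (k₁ * N v) ^ 2 := by
      rw [← sq_abs]
      gcongr
      simpa [cross_apply] using h₁ v
    have e₂ : v.1 ^ 2 ≤ (k₂ * N v) ^ 2 := by
      rw [← sq_abs]
      gcongr
      simpa [cross_apply] using h₂ v
    simp only [quadForm]
    calc 1 / (2 * k₂ ^ 2) * v.1 ^ 2 + 2 * 0 * v.1 * v.2 + 1 / (2 * k₁ ^ 2) * v.2 ^ 2
        ≤ 1 / (2 * k₂ ^ 2) * (k₂ * N v) ^ 2 + 2 * 0 * v.1 * v.2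
          + 1 / (2 * k₁ ^ 2) * (k₁ * N v) ^ 2 := by gcongr
      _ = N v ^ 2 := by field_simp; ring
  · simp only [quadDet]
    norm_num
    positivity

/-- The maximizer is the form of the John–Loewner ellipse of the unit ball. -/
theorem exists_isMaxOn_quadDet (hN : ∀ v, N v = 0 → v = 0) :
    ∃ M ∈ formsBelow N, 0 < quadDet M ∧ ∀ M' ∈ formsBelow N, quadDet M' ≤ quadDet M := by
  obtain ⟨M₀, hM₀, hpos⟩ := exists_mem_formsBelow_quadDet_pos hN
  obtain ⟨M, hM, hmax⟩ := (isCompact_formsBelow N).exists_isMaxOn ⟨M₀, hM₀⟩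
    (by unfold quadDet; fun_prop : Continuous quadDet).continuousOn
  exact ⟨M, hM, hpos.trans_le (hmax hM₀), fun M' hM' => hmax hM'⟩

theorem pullback_eq_of_isMaxOn {M : ℝ × ℝ × ℝ} (hM : M ∈ formsBelow N) (hpos : 0 < quadDet M)
    (hmax : ∀ M' ∈ formsBelow N, quadDet M' ≤ quadDet M) (T : ℝ × ℝ →ₗ[ℝ] ℝ × ℝ)
    (hT : ∀ v, N (T v) = N v) (hdet : cross (T (1, 0)) (T (0, 1)) ^ 2 = 1) :
    pullback M T = M := by
  have hM' : pullback M T ∈ formsBelow N := fun v => by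
    rw [quadForm_pullback, ← hT v]; exact hM (T v)
  have fst_nonneg : ∀ {M}, M ∈ formsBelow N → 0 ≤ M.1 := fun hM => by
    simpa [quadForm] using (hM (1, 0)).1
  exact eq_of_quadDet_midpoint_le (fst_nonneg hM') (fst_nonneg hM)
    (by rw [quadDet_pullback, hdet, mul_one]) rfl hpos
    (hmax _ (midpoint_mem_formsBelow hM' hM))

/-- The form of maximal determinant is invariant under all the reflections, which act
transitively on the unit sphere. -/
theorem quadForm_eq_of_isMaxOn (hN : ∀ v, N v = 0 → v = 0)
    (hB : ∀ a b, N a = N b → BirkhoffOrth N (a + b) (a - b)) {M : ℝ × ℝ × ℝ}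
    (hM : M ∈ formsBelow N) (hpos : 0 < quadDet M)
    (hmax : ∀ M' ∈ formsBelow N, quadDet M' ≤ quadDet M) {u v : ℝ × ℝ} (hu : N u = 1)
    (hv : N v = 1) : quadForm M u = quadForm M v := by
  rcases eq_or_ne u v with rfl | huv
  · rfl
  have hw : NoFlatAlong N (v - u) :=
    ⟨sub_ne_zero.mpr huv.symm, fun x a h _ => not_isFlat hN hB x a h⟩
  obtain ⟨z, hz, hb⟩ := exists_birkhoffOrth hN hw.ne_zero
  have hzw := cross_ne_zero_of_birkhoffOrth hb (ne_of_eq_of_ne hz one_ne_zero) hw.ne_zero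
  have hRu := refl_apply_eq_of_map_eq hN hB hw hz hb (hu.trans hv.symm) one_ne_zero
    (one_smul _ _).symm
  have hinv := pullback_eq_of_isMaxOn hM hpos hmax (refl z (v - u)) (map_refl hN hB hw hz hb)
    (by rw [cross_refl_refl hzw]; simp [cross_apply])
  rw [← hRu, ← quadForm_pullback, hinv]

theorem parallelogram_of_birkhoffOrth (hN : ∀ v, N v = 0 → v = 0)
    (hB : ∀ a b, N a = N b → BirkhoffOrth N (a + b) (a - b)) (a b : ℝ × ℝ) :
    N (a + b) ^ 2 + N (a - b) ^ 2 = 2 * N a ^ 2 + 2 * N b ^ 2 := by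
  obtain ⟨M, hM, hpos, hmax⟩ := exists_isMaxOn_quadDet hN
  have he : ((1 : ℝ), (0 : ℝ)) ≠ 0 := by simp
  set u₀ := (N (1, 0))⁻¹ • ((1 : ℝ), (0 : ℝ))
  have hu₀ : N u₀ = 1 := map_inv_smul_self hN he
  have hκ : 0 < quadForm M u₀ :=
    quadForm_pos (by simpa [quadForm] using (hM (1, 0)).1) hpos (by rintro h; simp [h] at hu₀)
  have hQ : ∀ v, quadForm M v = quadForm M u₀ * N v ^ 2 := by
    intro v
    rcases eq_or_ne v 0 with rfl | hv
    · simp [quadForm]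
    have := quadForm_eq_of_isMaxOn hN hB hM hpos hmax (map_inv_smul_self hN hv) hu₀
    rw [quadForm_smul, inv_pow] at this
    rw [← this]
    field_simp [(pos_of_ne_zero hN hv).ne']
  have := quadForm_add_add_quadForm_sub M a b
  rw [hQ (a + b), hQ (a - b), hQ a, hQ b] at this
  exact mul_left_cancel₀ hκ.ne' (by linarith)

end Ellipse

end PlaneNorm

section NormedSpace

variable {E : Type*} [NormedAddCommGroup E] [NormedSpace ℝ E]

theorem two_rpow_mul_sqrt_mul_le {q : ℝ} (hq : 0 < q) {α β : ℝ} (hα : 0 ≤ α) (hβ : 0 ≤ β) :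
    2 ^ (1 / q) * √(α * β) ≤ (α ^ q + β ^ q) ^ (1 / q) := by
  have amgm := Real.geom_mean_le_arith_mean2_weighted (w₁ := 1 / 2) (w₂ := 1 / 2)
    (by norm_num) (by norm_num) (Real.rpow_nonneg hα q) (Real.rpow_nonneg hβ q) (by norm_num)
  rw [← Real.mul_rpow (Real.rpow_nonneg hα q) (Real.rpow_nonneg hβ q),
    ← Real.mul_rpow hα hβ, ← Real.rpow_mul (mul_nonneg hα hβ)] at amgm
  have key : 2 * (α * β) ^ (q * (1 / 2)) ≤ α ^ q + β ^ q := by linarith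
  calc 2 ^ (1 / q) * √(α * β) = (2 * (α * β) ^ (q * (1 / 2))) ^ (1 / q) := by
        rw [Real.mul_rpow (by norm_num) (by positivity), ← Real.rpow_mul (mul_nonneg hα hβ),
          Real.sqrt_eq_rpow]
        congr 2
        field_simp
    _ ≤ (α ^ q + β ^ q) ^ (1 / q) := by gcongr

theorem sqrt_mul_norm_sub_le {q : ℝ} (hq : 0 < q)
    (h : ∀ x y : E, x ≠ 0 → y ≠ 0 →
      ‖‖x‖⁻¹ • x - ‖y‖⁻¹ • y‖ ≤ 2 ^ (1 / q) * ‖x - y‖ / (‖x‖ ^ q + ‖y‖ ^ q) ^ (1 / q))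
    {x y : E} (hx : x ≠ 0) (hy : y ≠ 0) :
    √(‖x‖ * ‖y‖) * ‖‖x‖⁻¹ • x - ‖y‖⁻¹ • y‖ ≤ ‖x - y‖ := by
  have hP : 0 < (‖x‖ ^ q + ‖y‖ ^ q) ^ (1 / q) := by
    have := Real.rpow_pos_of_pos (norm_pos_iff.mpr hx) q
    have := Real.rpow_pos_of_pos (norm_pos_iff.mpr hy) q
    positivity
  calc √(‖x‖ * ‖y‖) * ‖‖x‖⁻¹ • x - ‖y‖⁻¹ • y‖
      ≤ √(‖x‖ * ‖y‖) * (2 ^ (1 / q) * ‖x - y‖ / (‖x‖ ^ q + ‖y‖ ^ q) ^ (1 / q)) := by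
        gcongr; exact h x y hx hy
    _ = 2 ^ (1 / q) * √(‖x‖ * ‖y‖) * ‖x - y‖ / (‖x‖ ^ q + ‖y‖ ^ q) ^ (1 / q) := by ring
    _ ≤ (‖x‖ ^ q + ‖y‖ ^ q) ^ (1 / q) * ‖x - y‖ / (‖x‖ ^ q + ‖y‖ ^ q) ^ (1 / q) := by
        gcongr; exact two_rpow_mul_sqrt_mul_le hq (norm_nonneg x) (norm_nonneg y)
    _ = ‖x - y‖ := by field_simp

theorem convexOn_norm_add_smul (c d : E) : ConvexOn ℝ univ fun s : ℝ => ‖c + s • d‖ := by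
  refine ⟨convex_univ, fun s _ t _ α β hα hβ hαβ => ?_⟩
  calc ‖c + (α • s + β • t) • d‖ = ‖α • (c + s • d) + β • (c + t • d)‖ := by
        congr 1
        have hc : c = (α + β) • c := by rw [hαβ, one_smul]
        conv_lhs => rw [hc]
        simp only [smul_eq_mul]
        module
    _ ≤ α • ‖c + s • d‖ + β • ‖c + t • d‖ := by
        refine (norm_add_le _ _).trans_eq ?_
        rw [norm_smul, norm_smul, Real.norm_of_nonneg hα, Real.norm_of_nonneg hβ, smul_eq_mul,
          smul_eq_mul]

/-- Along a chord to a smaller value, `f` would decrease linearly near `0`, faster than `s²`. -/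
theorem le_of_convexOn_of_one_sub_sq_mul_le {f : ℝ → ℝ} (hf : ConvexOn ℝ univ f)
    (h : ∀ s ∈ Ioo (-1 : ℝ) 1, (1 - s ^ 2) * f 0 ≤ f s) (t : ℝ) : f 0 ≤ f t := by
  by_contra! ht
  set δ := f 0 - f t
  have hδ : 0 < δ := sub_pos.mpr ht
  obtain ⟨n, hn⟩ := exists_nat_gt (max 1 (max |t| (t ^ 2 * f 0 / δ)))
  have hn1 : 1 < (n : ℝ) := (le_max_left _ _).trans_lt hn
  have hnt : |t| < n := (le_max_left _ _).trans_lt ((le_max_right _ _).trans_lt hn)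
  have hnδ : t ^ 2 * f 0 / δ < n := (le_max_right _ _).trans_lt ((le_max_right _ _).trans_lt hn)
  have hn0 : (0 : ℝ) < n := by linarith
  have hchord : f (t / n) ≤ f 0 - δ / n := by
    have := hf.2 (mem_univ 0) (mem_univ t)
      (show (0 : ℝ) ≤ 1 - 1 / n by rw [sub_nonneg, div_le_one hn0]; exact hn1.le)
      (show (0 : ℝ) ≤ 1 / n by positivity) (by ring)
    simp only [smul_eq_mul, mul_zero, zero_add] at this
    rw [show t / n = 1 / n * t by ring]
    refine this.trans_eq ?_
    simp only [δ]
    ring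
  have hlow := h (t / n) (by
    rw [mem_Ioo, ← abs_lt, abs_div, Nat.abs_cast, div_lt_one hn0]; exact hnt)
  rw [show (1 - (t / n) ^ 2) * f 0 = f 0 - t ^ 2 * f 0 / n / n by field_simp] at hlow
  have h₁ : δ ≤ t ^ 2 * f 0 / n := by
    rw [← div_le_div_iff_of_pos_right hn0]; linarith
  have h₂ : t ^ 2 * f 0 / n < δ := by
    rw [div_lt_iff₀ hδ] at hnδ; rw [div_lt_iff₀ hn0]; linarith
  linarith

theorem sqrt_one_sub_sq_mul_norm_add_le
    (hDW : ∀ x y : E, x ≠ 0 → y ≠ 0 → √(‖x‖ * ‖y‖) * ‖‖x‖⁻¹ • x - ‖y‖⁻¹ • y‖ ≤ ‖x - y‖)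
    {a b : E} (ha : a ≠ 0) (hab : ‖a‖ = ‖b‖) {s : ℝ} (hs₁ : -1 < s) (hs₂ : s < 1) :
    √(1 - s ^ 2) * ‖a + b‖ ≤ ‖a + b + s • (a - b)‖ := by
  have hb : b ≠ 0 := by rintro rfl; exact ha (norm_eq_zero.mp (hab.trans norm_zero))
  set ρ := ‖a‖
  have hρ : 0 < ρ := norm_pos_iff.mpr ha
  have h₁ : 0 < 1 + s := by linarith
  have h₂ : 0 < 1 - s := by linarith
  have key := hDW ((1 + s) • a) (-((1 - s) • b)) (smul_ne_zero h₁.ne' ha)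
    (neg_ne_zero.mpr (smul_ne_zero h₂.ne' hb))
  rw [norm_neg, norm_smul, norm_smul, Real.norm_of_nonneg h₁.le, Real.norm_of_nonneg h₂.le,
    ← hab] at key
  have e₁ : ((1 + s) * ρ)⁻¹ • ((1 + s) • a) - ((1 - s) * ρ)⁻¹ • -((1 - s) • b) =
      ρ⁻¹ • (a + b) := by
    simp only [smul_neg, sub_neg_eq_add, smul_smul, smul_add]
    congr 2 <;> field_simp
  have e₂ : √((1 + s) * ρ * ((1 - s) * ρ)) = ρ * √(1 - s ^ 2) := by
    rw [show (1 + s) * ρ * ((1 - s) * ρ) = ρ ^ 2 * (1 - s ^ 2) by ring,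
      Real.sqrt_mul (sq_nonneg _), Real.sqrt_sq hρ.le]
  rw [e₁, e₂, norm_smul, Real.norm_of_nonneg (inv_nonneg.mpr hρ.le),
    show (1 + s) • a - -((1 - s) • b) = a + b + s • (a - b) by module] at key
  calc √(1 - s ^ 2) * ‖a + b‖ = ρ * √(1 - s ^ 2) * (ρ⁻¹ * ‖a + b‖) := by field_simp
    _ ≤ _ := key

theorem birkhoffOrth_add_sub_of_norm_eq
    (hDW : ∀ x y : E, x ≠ 0 → y ≠ 0 → √(‖x‖ * ‖y‖) * ‖‖x‖⁻¹ • x - ‖y‖⁻¹ • y‖ ≤ ‖x - y‖)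
    {a b : E} (hab : ‖a‖ = ‖b‖) : BirkhoffOrth (‖·‖) (a + b) (a - b) := by
  rcases eq_or_ne a 0 with rfl | ha
  · rw [norm_zero, eq_comm, norm_eq_zero] at hab
    subst hab
    intro t
    simp
  intro t
  have := le_of_convexOn_of_one_sub_sq_mul_le (convexOn_norm_add_smul (a + b) (a - b)) ?_ t
  · simpa using this
  rintro s ⟨hs₁, hs₂⟩
  have hs : 0 ≤ 1 - s ^ 2 := by nlinarith
  have hsqrt : 1 - s ^ 2 ≤ √(1 - s ^ 2) :=
    (Real.le_sqrt hs hs).mpr (by nlinarith [mul_nonneg hs (sq_nonneg s)])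
  simp only [zero_smul, add_zero]
  exact (mul_le_mul_of_nonneg_right hsqrt (norm_nonneg _)).trans
    (sqrt_one_sub_sq_mul_norm_add_le hDW ha hab hs₁ hs₂)

theorem norm_smul_add_sq_add_norm_smul_sub_sq (u : E) (a b : ℝ) :
    ‖a • u + b • u‖ ^ 2 + ‖a • u - b • u‖ ^ 2 = 2 * ‖a • u‖ ^ 2 + 2 * ‖b • u‖ ^ 2 := by
  rw [← add_smul, ← sub_smul]
  simp only [norm_smul, mul_pow, Real.norm_eq_abs, sq_abs]
  ring

theorem parallelogram_of_birkhoffOrth_add_sub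
    (hB : ∀ a b : E, ‖a‖ = ‖b‖ → BirkhoffOrth (‖·‖) (a + b) (a - b)) (x y : E) :
    ‖x + y‖ ^ 2 + ‖x - y‖ ^ 2 = 2 * ‖x‖ ^ 2 + 2 * ‖y‖ ^ 2 := by
  by_cases hxy : LinearIndependent ℝ ![x, y]
  · set L : ℝ × ℝ →ₗ[ℝ] E :=
      (LinearMap.toSpanSingleton ℝ E x).coprod (LinearMap.toSpanSingleton ℝ E y)
    set N := (normSeminorm ℝ E).comp L
    have hN : ∀ v, N v = 0 → v = 0 := fun v hv => by
      have := LinearIndependent.pair_iff.mp hxy v.1 v.2 (by simpa [N, L] using hv)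
      exact Prod.ext this.1 this.2
    have hBN : ∀ a b, N a = N b → BirkhoffOrth N (a + b) (a - b) := fun a b hab t => by
      simpa [N] using hB (L a) (L b) (by simpa [N] using hab) t
    simpa [N, L, sub_eq_add_neg] using PlaneNorm.parallelogram_of_birkhoffOrth hN hBN (1, 0) (0, 1)
  · obtain ⟨s, t, hst, hne⟩ : ∃ s t : ℝ, s • x + t • y = 0 ∧ ¬(s = 0 ∧ t = 0) := by
      simpa [LinearIndependent.pair_iff] using hxy
    by_cases ht : t = 0
    · have hx : x = 0 := by
        subst ht
        simpa [show s ≠ 0 by tauto] using hst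
      simpa [hx] using norm_smul_add_sq_add_norm_smul_sub_sq y 0 1
    · have hy : y = (-s / t) • x := by
        rw [← inv_smul_smul₀ ht y, eq_neg_of_add_eq_zero_right hst, smul_neg, smul_smul,
          ← neg_smul]
        congr 1
        ring
      simpa [hy] using norm_smul_add_sq_add_norm_smul_sub_sq x 1 (-s / t)

end NormedSpace

theorem al_rashed {X : Type*} [NormedAddCommGroup X] [NormedSpace ℝ X]
    (q : ℝ) (hq : q ∈ Set.Ioc (0:ℝ) 1)
    (h : ∀ x y : X, x ≠ 0 → y ≠ 0 →
      ‖‖x‖⁻¹ • x - ‖y‖⁻¹ • y‖ ≤ 2 ^ (1 / q) * ‖x - y‖ / (‖x‖ ^ q + ‖y‖ ^ q) ^ (1 / q)) :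
    ∀ x y : X, ‖x + y‖ ^ 2 + ‖x - y‖ ^ 2 = 2 * ‖x‖ ^ 2 + 2 * ‖y‖ ^ 2 :=
  parallelogram_of_birkhoffOrth_add_sub fun _ _ =>
    birkhoffOrth_add_sub_of_norm_eq fun _ _ hx hy => sqrt_mul_norm_sub_le hq.1 h hx hy
end
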